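/- arXiv:2605.10591 — 3 statements merged into one kernel-verified Lean document; each statement's English description precedes it below -/
import Mathlib

section
/- Let p ∈ 𝕜[t] be a solution denominator with r := deg p ≥ 1 and let c be the leading coefficient of p. Then r is edge-admissible and P_r(1/c) = 0. -/
open Polynomial

/-- Index set `{3, 2, 1, ∂}` for the terms of the generalized Abel equation. -/
inductive AbelIdx : Type
  | I1 : AbelIdx
  | I2 : AbelIdx
  | I3 : AbelIdx
  | D  : AbelIdx
  deriving DecidableEq

instance : Fintype AbelIdx :=
  ⟨{AbelIdx.I1, AbelIdx.I2, AbelIdx.I3, AbelIdx.D}, fun x => by cases x <;> simp⟩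

/-- `p` is a solution denominator: `p ≠ 0` and
`p^(n3-2)·p' + A3 + A2·p^(n3-n2) + A1·p^(n3-n1) = 0`, i.e. `x = 1/p` solves the
generalized Abel equation `x' = A3 x^{n3} + A2 x^{n2} + A1 x^{n1}`. -/
def IsSolDen {𝕜 : Type*} [Field 𝕜] (n1 n2 n3 : ℕ) (A1 A2 A3 : Polynomial 𝕜)
    (p : Polynomial 𝕜) : Prop :=
  p ≠ 0 ∧
    p ^ (n3 - 2) * Polynomial.derivative p + A3 + A2 * p ^ (n3 - n2) + A1 * p ^ (n3 - n1) = 0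

/-- `Φ_ℓ(r)` for `ℓ ∈ {1,2,3,∂}`. -/
def Phi (n1 n2 n3 a1 a2 a3 r : ℕ) : AbelIdx → ℤ
  | .I1 => (n1 : ℤ) * r - a1
  | .I2 => (n2 : ℤ) * r - a2
  | .I3 => (n3 : ℤ) * r - a3
  | .D  => (r : ℤ) + 1

/-- `O_r`, the minimum of the four `Φ_ℓ(r)`. -/
def Omin (n1 n2 n3 a1 a2 a3 r : ℕ) : ℤ :=
  min (min (Phi n1 n2 n3 a1 a2 a3 r .I1) (Phi n1 n2 n3 a1 a2 a3 r .I2))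
      (min (Phi n1 n2 n3 a1 a2 a3 r .I3) (Phi n1 n2 n3 a1 a2 a3 r .D))

/-- `T_r = {ℓ : Φ_ℓ(r) = O_r}`. -/
def Tie (n1 n2 n3 a1 a2 a3 r : ℕ) : Finset AbelIdx :=
  Finset.univ.filter fun ℓ => Phi n1 n2 n3 a1 a2 a3 r ℓ = Omin n1 n2 n3 a1 a2 a3 r

/-- `r` is edge-admissible if `T_r` has at least two elements. -/
def EdgeAdmissible (n1 n2 n3 a1 a2 a3 r : ℕ) : Prop :=
  2 ≤ (Tie n1 n2 n3 a1 a2 a3 r).card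

/-- The edge polynomial `P_r(C)`. -/
noncomputable def edgePoly {𝕜 : Type*} [Field 𝕜] (n1 n2 n3 : ℕ)
    (A1 A2 A3 : Polynomial 𝕜) (r : ℕ) : Polynomial 𝕜 :=
  (if AbelIdx.I1 ∈ Tie n1 n2 n3 A1.natDegree A2.natDegree A3.natDegree r then
      Polynomial.C A1.leadingCoeff * Polynomial.X ^ n1 else 0) +
  (if AbelIdx.I2 ∈ Tie n1 n2 n3 A1.natDegree A2.natDegree A3.natDegree r then
      Polynomial.C A2.leadingCoeff * Polynomial.X ^ n2 else 0) +
  (if AbelIdx.I3 ∈ Tie n1 n2 n3 A1.natDegree A2.natDegree A3.natDegree r then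
      Polynomial.C A3.leadingCoeff * Polynomial.X ^ n3 else 0) +
  (if AbelIdx.D ∈ Tie n1 n2 n3 A1.natDegree A2.natDegree A3.natDegree r then
      (r : Polynomial 𝕜) * Polynomial.X else 0)

/-- The set `Γ` of candidate denominator degrees. -/
def Gamma (n1 n2 n3 a1 a2 a3 : ℕ) : Set ℕ :=
  {r | 0 < r ∧ ((n3 : ℤ) - n2) * r ≤ (a3 : ℤ) ∧
    (((n3 : ℤ) - n2) * r = (a3 : ℤ) - a2 ∨
     ((n3 : ℤ) - n1) * r = (a3 : ℤ) - a1 ∨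
     ((n2 : ℤ) - n1) * r = (a2 : ℤ) - a1 ∨
     ((n3 : ℤ) - 1) * r = (a3 : ℤ) + 1 ∨
     ((n2 : ℤ) - 1) * r = (a2 : ℤ) + 1 ∨
     ((n1 : ℤ) - 1) * r = (a1 : ℤ) + 1)}

/-- The nondegeneracy hypothesis (ND). -/
def ND {𝕜 : Type*} [Field 𝕜] (n1 n2 n3 : ℕ) (A1 A2 A3 : Polynomial 𝕜) : Prop :=
  ∀ r : ℕ, r ∈ Gamma n1 n2 n3 A1.natDegree A2.natDegree A3.natDegree →
    EdgeAdmissible n1 n2 n3 A1.natDegree A2.natDegree A3.natDegree r →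
    ((∀ c : 𝕜, c ≠ 0 → (edgePoly n1 n2 n3 A1 A2 A3 r).IsRoot c →
        (Polynomial.derivative (edgePoly n1 n2 n3 A1 A2 A3 r)).eval c ≠ 0) ∧
     (AbelIdx.D ∈ Tie n1 n2 n3 A1.natDegree A2.natDegree A3.natDegree r →
        ∀ c : 𝕜, c ≠ 0 → (edgePoly n1 n2 n3 A1 A2 A3 r).IsRoot c →
          ∀ m : ℕ, 1 ≤ m →
            (Polynomial.derivative (edgePoly n1 n2 n3 A1 A2 A3 r)).eval c + (m : 𝕜) ≠ 0) ∧
     (¬ ∃ c1 c2 ζ : 𝕜, c1 ≠ 0 ∧ c2 ≠ 0 ∧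
        (edgePoly n1 n2 n3 A1 A2 A3 r).IsRoot c1 ∧
        (edgePoly n1 n2 n3 A1 A2 A3 r).IsRoot c2 ∧
        ζ ≠ 1 ∧ c1 = ζ * c2 ∧
        (ζ ^ (n3 - n2) = 1 ∨ ζ ^ (n3 - n1) = 1 ∨ ζ ^ (n3 - 1) = 1)))

/-- The power-series form `E_r(y)` of the generalized Abel equation at infinity. -/
noncomputable def abelPS {𝕜 : Type*} [Field 𝕜] (n1 n2 n3 : ℕ)
    (A1 A2 A3 : Polynomial 𝕜) (r : ℕ) (y : PowerSeries 𝕜) : PowerSeries 𝕜 :=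
  PowerSeries.X ^ (((r : ℤ) + 1 - Omin n1 n2 n3 A1.natDegree A2.natDegree A3.natDegree r).toNat) *
      ((r : PowerSeries 𝕜) * y + PowerSeries.X * PowerSeries.derivativeFun y) +
  PowerSeries.X ^ ((Phi n1 n2 n3 A1.natDegree A2.natDegree A3.natDegree r AbelIdx.I1 -
      Omin n1 n2 n3 A1.natDegree A2.natDegree A3.natDegree r).toNat) *
      (A1.reverse : PowerSeries 𝕜) * y ^ n1 +
  PowerSeries.X ^ ((Phi n1 n2 n3 A1.natDegree A2.natDegree A3.natDegree r AbelIdx.I2 -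
      Omin n1 n2 n3 A1.natDegree A2.natDegree A3.natDegree r).toNat) *
      (A2.reverse : PowerSeries 𝕜) * y ^ n2 +
  PowerSeries.X ^ ((Phi n1 n2 n3 A1.natDegree A2.natDegree A3.natDegree r AbelIdx.I3 -
      Omin n1 n2 n3 A1.natDegree A2.natDegree A3.natDegree r).toNat) *
      (A3.reverse : PowerSeries 𝕜) * y ^ n3

/-- Proposition 3.5. If `p` is a solution denominator of degree
`r ≥ 1` with leading coefficient `c`, then `r` is edge-admissible and `P_r(1/c) = 0`. -/
theorem stmt3 {𝕜 : Type*} [RCLike 𝕜] (n1 n2 n3 : ℕ)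
    (hn1 : 1 < n1) (hn12 : n1 < n2) (hn23 : n2 < n3)
    (A1 A2 A3 : Polynomial 𝕜) (hA1 : A1 ≠ 0) (hA2 : A2 ≠ 0) (hA3 : A3 ≠ 0)
    (p : Polynomial 𝕜) (hp : IsSolDen n1 n2 n3 A1 A2 A3 p) (hdeg : 1 ≤ p.natDegree) :
    EdgeAdmissible n1 n2 n3 A1.natDegree A2.natDegree A3.natDegree p.natDegree ∧
      (edgePoly n1 n2 n3 A1 A2 A3 p.natDegree).eval (p.leadingCoeff)⁻¹ = 0 := by
  obtain ⟨hp0, heq⟩ := hp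
  have hcne : p.leadingCoeff ≠ 0 := Polynomial.leadingCoeff_ne_zero.mpr hp0
  set r := p.natDegree with hrdef
  set c := p.leadingCoeff with hcdef
  set a1 := A1.natDegree with ha1def
  set a2 := A2.natDegree with ha2def
  set a3 := A3.natDegree with ha3def
  have hr1 : 1 ≤ r := hdeg
  have hrne : ((r : 𝕜)) ≠ 0 := Nat.cast_ne_zero.mpr (by omega)
  -- derivative facts
  have hdc : (Polynomial.derivative p).coeff (r - 1) = c * r := by
    rw [Polynomial.coeff_derivative, show r - 1 + 1 = r from by omega,
      Polynomial.coeff_natDegree]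
    rw [Nat.cast_sub hr1]
    push_cast
    ring
  have hdcne : c * (r : 𝕜) ≠ 0 := mul_ne_zero hcne hrne
  have hp' : Polynomial.derivative p ≠ 0 := by
    intro h
    rw [h, Polynomial.coeff_zero] at hdc
    exact hdcne hdc.symm
  have hdpdeg : (Polynomial.derivative p).natDegree = r - 1 :=
    le_antisymm (Polynomial.natDegree_derivative_le p)
      (Polynomial.le_natDegree_of_ne_zero (hdc ▸ hdcne))
  have hdlc : (Polynomial.derivative p).leadingCoeff = c * r := by
    rw [Polynomial.leadingCoeff, hdpdeg]; exact hdc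
  -- degrees and leading coefficients of the four terms
  have hTd_deg : (p ^ (n3-2) * Polynomial.derivative p).natDegree = (n3-2)*r + (r-1) := by
    rw [Polynomial.natDegree_mul (pow_ne_zero _ hp0) hp', Polynomial.natDegree_pow, hdpdeg]
  have hTd_lc : (p ^ (n3-2) * Polynomial.derivative p).leadingCoeff = c^(n3-2) * (c*r) := by
    rw [Polynomial.leadingCoeff_mul, Polynomial.leadingCoeff_pow, hdlc]
  have hT2_deg : (A2 * p ^ (n3-n2)).natDegree = a2 + (n3-n2)*r := by
    rw [Polynomial.natDegree_mul hA2 (pow_ne_zero _ hp0), Polynomial.natDegree_pow]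
  have hT2_lc : (A2 * p ^ (n3-n2)).leadingCoeff = A2.leadingCoeff * c^(n3-n2) := by
    rw [Polynomial.leadingCoeff_mul, Polynomial.leadingCoeff_pow]
  have hT1_deg : (A1 * p ^ (n3-n1)).natDegree = a1 + (n3-n1)*r := by
    rw [Polynomial.natDegree_mul hA1 (pow_ne_zero _ hp0), Polynomial.natDegree_pow]
  have hT1_lc : (A1 * p ^ (n3-n1)).leadingCoeff = A1.leadingCoeff * c^(n3-n1) := by
    rw [Polynomial.leadingCoeff_mul, Polynomial.leadingCoeff_pow]
  set d1 := a1 + (n3-n1)*r with hd1def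
  set d2 := a2 + (n3-n2)*r with hd2def
  set d3 := a3 with hd3def
  set dd := (n3-2)*r + (r-1) with hdddef
  set D := max (max d1 d2) (max d3 dd) with hDdef
  -- nonzero leading coefficients
  have hlc1 : A1.leadingCoeff * c^(n3-n1) ≠ 0 :=
    mul_ne_zero (Polynomial.leadingCoeff_ne_zero.mpr hA1) (pow_ne_zero _ hcne)
  have hlc2 : A2.leadingCoeff * c^(n3-n2) ≠ 0 :=
    mul_ne_zero (Polynomial.leadingCoeff_ne_zero.mpr hA2) (pow_ne_zero _ hcne)
  have hlc3 : A3.leadingCoeff ≠ 0 := Polynomial.leadingCoeff_ne_zero.mpr hA3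
  have hlcd : c^(n3-2) * (c*(r:𝕜)) ≠ 0 := mul_ne_zero (pow_ne_zero _ hcne) hdcne
  -- the coefficient of degree D of the equation
  have h0 : (p ^ (n3-2) * Polynomial.derivative p).coeff D + A3.coeff D
      + (A2 * p ^ (n3-n2)).coeff D + (A1 * p ^ (n3-n1)).coeff D = 0 := by
    have := congrArg (fun q => Polynomial.coeff q D) heq
    simpa using this
  have cd : ∀ q : Polynomial 𝕜, q.natDegree ≤ D →
      q.coeff D = if q.natDegree = D then q.leadingCoeff else 0 := by
    intro q h
    split_ifs with h'
    · rw [← h', Polynomial.coeff_natDegree]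
    · exact Polynomial.coeff_eq_zero_of_natDegree_lt (lt_of_le_of_ne h h')
  rw [cd _ (by rw [hTd_deg]; exact (le_max_right _ _).trans (le_max_right _ _)),
      cd _ (le_trans (le_max_left d3 dd) (le_max_right _ _)),
      cd _ (by rw [hT2_deg]; exact (le_max_right _ _).trans (le_max_left _ _)),
      cd _ (by rw [hT1_deg]; exact (le_max_left _ _).trans (le_max_left _ _))] at h0
  rw [hTd_deg, hTd_lc, hT2_deg, hT2_lc, hT1_deg, hT1_lc] at h0
  have hS : (if dd = D then c^(n3-2) * (c*(r:𝕜)) else 0)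
      + (if d3 = D then A3.leadingCoeff else 0)
      + (if d2 = D then A2.leadingCoeff * c^(n3-n2) else 0)
      + (if d1 = D then A1.leadingCoeff * c^(n3-n1) else 0) = 0 := h0
  clear h0
  -- Phi/Omin computations
  have hΦ1 : Phi n1 n2 n3 a1 a2 a3 r AbelIdx.I1 = (n3:ℤ)*r - d1 := by
    simp only [Phi, hd1def]
    push_cast [Nat.cast_sub (show n1 ≤ n3 from by omega)]
    ring
  have hΦ2 : Phi n1 n2 n3 a1 a2 a3 r AbelIdx.I2 = (n3:ℤ)*r - d2 := by
    simp only [Phi, hd2def]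
    push_cast [Nat.cast_sub (show n2 ≤ n3 from by omega)]
    ring
  have hΦ3 : Phi n1 n2 n3 a1 a2 a3 r AbelIdx.I3 = (n3:ℤ)*r - d3 := by
    simp only [Phi, hd3def]
  have hΦd : Phi n1 n2 n3 a1 a2 a3 r AbelIdx.D = (n3:ℤ)*r - dd := by
    simp only [Phi, hdddef]
    push_cast [Nat.cast_sub (show 2 ≤ n3 from by omega), Nat.cast_sub hr1]
    ring
  have hOm : Omin n1 n2 n3 a1 a2 a3 r = (n3:ℤ)*r - D := by
    simp only [Omin, hΦ1, hΦ2, hΦ3, hΦd]; omega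
  have ht1 : (AbelIdx.I1 ∈ Tie n1 n2 n3 a1 a2 a3 r) ↔ d1 = D := by
    simp only [Tie, Finset.mem_filter, Finset.mem_univ, true_and, hΦ1, hOm]; omega
  have ht2 : (AbelIdx.I2 ∈ Tie n1 n2 n3 a1 a2 a3 r) ↔ d2 = D := by
    simp only [Tie, Finset.mem_filter, Finset.mem_univ, true_and, hΦ2, hOm]; omega
  have ht3 : (AbelIdx.I3 ∈ Tie n1 n2 n3 a1 a2 a3 r) ↔ d3 = D := by
    simp only [Tie, Finset.mem_filter, Finset.mem_univ, true_and, hΦ3, hOm]; omega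
  have htd : (AbelIdx.D ∈ Tie n1 n2 n3 a1 a2 a3 r) ↔ dd = D := by
    simp only [Tie, Finset.mem_filter, Finset.mem_univ, true_and, hΦd, hOm]; omega
  constructor
  · -- edge admissibility
    rw [EdgeAdmissible]
    refine Finset.one_lt_card.mpr ?_
    rcases (by omega : d1 = D ∨ d2 = D ∨ d3 = D ∨ dd = D) with h | h | h | h
    · by_cases h2 : d2 = D
      · exact ⟨_, ht1.mpr h, _, ht2.mpr h2, by decide⟩
      by_cases h3 : d3 = D
      · exact ⟨_, ht1.mpr h, _, ht3.mpr h3, by decide⟩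
      by_cases h4 : dd = D
      · exact ⟨_, ht1.mpr h, _, htd.mpr h4, by decide⟩
      · exfalso
        rw [if_neg h4, if_neg h3, if_neg h2, if_pos h] at hS
        simp only [zero_add, add_zero] at hS
        exact hlc1 hS
    · by_cases h1 : d1 = D
      · exact ⟨_, ht2.mpr h, _, ht1.mpr h1, by decide⟩
      by_cases h3 : d3 = D
      · exact ⟨_, ht2.mpr h, _, ht3.mpr h3, by decide⟩
      by_cases h4 : dd = D
      · exact ⟨_, ht2.mpr h, _, htd.mpr h4, by decide⟩
      · exfalso
        rw [if_neg h4, if_neg h3, if_pos h, if_neg h1] at hS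
        simp only [zero_add, add_zero] at hS
        exact hlc2 hS
    · by_cases h1 : d1 = D
      · exact ⟨_, ht3.mpr h, _, ht1.mpr h1, by decide⟩
      by_cases h2 : d2 = D
      · exact ⟨_, ht3.mpr h, _, ht2.mpr h2, by decide⟩
      by_cases h4 : dd = D
      · exact ⟨_, ht3.mpr h, _, htd.mpr h4, by decide⟩
      · exfalso
        rw [if_neg h4, if_pos h, if_neg h2, if_neg h1] at hS
        simp only [zero_add, add_zero] at hS
        exact hlc3 hS
    · by_cases h1 : d1 = D
      · exact ⟨_, htd.mpr h, _, ht1.mpr h1, by decide⟩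
      by_cases h2 : d2 = D
      · exact ⟨_, htd.mpr h, _, ht2.mpr h2, by decide⟩
      by_cases h3 : d3 = D
      · exact ⟨_, htd.mpr h, _, ht3.mpr h3, by decide⟩
      · exfalso
        rw [if_pos h, if_neg h3, if_neg h2, if_neg h1] at hS
        simp only [zero_add, add_zero] at hS
        exact hlcd hS
  · -- eval of the edge polynomial
    have key : ∀ m, m ≤ n3 → (c⁻¹)^m = c^(n3-m) * (c⁻¹)^n3 := by
      intro m hm
      calc (c⁻¹)^m = (c^(n3-m) * (c⁻¹)^(n3-m)) * (c⁻¹)^m := by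
            rw [← mul_pow, mul_inv_cancel₀ hcne, one_pow, one_mul]
        _ = c^(n3-m) * (c⁻¹)^n3 := by
            rw [mul_assoc, ← pow_add, show (n3-m) + m = n3 from by omega]
    have e1 : A1.leadingCoeff * (c⁻¹)^n1 = (A1.leadingCoeff * c^(n3-n1)) * (c⁻¹)^n3 := by
      rw [key n1 (by omega)]; ring
    have e2 : A2.leadingCoeff * (c⁻¹)^n2 = (A2.leadingCoeff * c^(n3-n2)) * (c⁻¹)^n3 := by
      rw [key n2 (by omega)]; ring
    have hcc : c^(n3-2) * c = c^(n3-1) := by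
      rw [← pow_succ, show n3 - 2 + 1 = n3 - 1 from by omega]
    have ed : (r:𝕜) * c⁻¹ = (c^(n3-2) * (c*(r:𝕜))) * (c⁻¹)^n3 := by
      calc (r:𝕜) * c⁻¹ = (r:𝕜) * (c⁻¹)^1 := by rw [pow_one]
        _ = (r:𝕜) * (c^(n3-1) * (c⁻¹)^n3) := by rw [key 1 (by omega)]
        _ = (c^(n3-2) * c) * (r:𝕜) * (c⁻¹)^n3 := by rw [hcc]; ring
        _ = (c^(n3-2) * (c*(r:𝕜))) * (c⁻¹)^n3 := by ring
    have e1' : (if d1 = D then A1.leadingCoeff * (c⁻¹)^n1 else 0)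
        = (if d1 = D then A1.leadingCoeff * c^(n3-n1) else 0) * (c⁻¹)^n3 := by
      split_ifs
      · exact e1
      · rw [zero_mul]
    have e2' : (if d2 = D then A2.leadingCoeff * (c⁻¹)^n2 else 0)
        = (if d2 = D then A2.leadingCoeff * c^(n3-n2) else 0) * (c⁻¹)^n3 := by
      split_ifs
      · exact e2
      · rw [zero_mul]
    have e3' : (if d3 = D then A3.leadingCoeff * (c⁻¹)^n3 else 0)
        = (if d3 = D then A3.leadingCoeff else 0) * (c⁻¹)^n3 := by
      split_ifs
      · rfl
      · rw [zero_mul]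
    have ed' : (if dd = D then (r:𝕜) * c⁻¹ else 0)
        = (if dd = D then c^(n3-2) * (c*(r:𝕜)) else 0) * (c⁻¹)^n3 := by
      split_ifs
      · exact ed
      · rw [zero_mul]
    have hEval : (edgePoly n1 n2 n3 A1 A2 A3 r).eval c⁻¹
        = (if d1 = D then A1.leadingCoeff * (c⁻¹)^n1 else 0)
          + (if d2 = D then A2.leadingCoeff * (c⁻¹)^n2 else 0)
          + (if d3 = D then A3.leadingCoeff * (c⁻¹)^n3 else 0)
          + (if dd = D then (r:𝕜) * c⁻¹ else 0) := by
      simp only [edgePoly, Polynomial.eval_add, apply_ite (Polynomial.eval (c⁻¹ : 𝕜)),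
        Polynomial.eval_mul, Polynomial.eval_pow, Polynomial.eval_C, Polynomial.eval_X,
        Polynomial.eval_natCast, Polynomial.eval_zero,
        show (AbelIdx.I1 ∈ Tie n1 n2 n3 A1.natDegree A2.natDegree A3.natDegree r) ↔ d1 = D from ht1,
        show (AbelIdx.I2 ∈ Tie n1 n2 n3 A1.natDegree A2.natDegree A3.natDegree r) ↔ d2 = D from ht2,
        show (AbelIdx.I3 ∈ Tie n1 n2 n3 A1.natDegree A2.natDegree A3.natDegree r) ↔ d3 = D from ht3,
        show (AbelIdx.D ∈ Tie n1 n2 n3 A1.natDegree A2.natDegree A3.natDegree r) ↔ dd = D from htd]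
    rw [hEval, e1', e2', e3', ed', ← add_mul, ← add_mul, ← add_mul]
    have hS' : (if d1 = D then A1.leadingCoeff * c^(n3-n1) else 0)
        + (if d2 = D then A2.leadingCoeff * c^(n3-n2) else 0)
        + (if d3 = D then A3.leadingCoeff else 0)
        + (if dd = D then c^(n3-2) * (c*(r:𝕜)) else 0) = 0 := by
      linear_combination hS
    rw [hS', zero_mul]
end

section
/- Let p1, p2, p3 ∈ 𝕜[t] be nonzero polynomials with deg p1 < deg p2 < deg p3. Then the determinant Δ := (p2^{n3−n2} − p1^{n3−n2})·(p3^{n3−n1} − p1^{n3−n1}) − (p3^{n3−n2} − p1^{n3−n2})·(p2^{n3−n1} − p1^{n3−n1}) is a nonzero polynomial in 𝕜[t]. -/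
open Polynomial

/-- Auxiliary: if `deg p < deg q` and `0 < k` then `q^k - p^k` has degree `k * deg q`. -/
lemma pow_sub_pow_degree {𝕜 : Type*} [Field 𝕜] (p q : Polynomial 𝕜) (hq : q ≠ 0)
    (h : p.natDegree < q.natDegree) (k : ℕ) (hk : 0 < k) :
    (q ^ k - p ^ k).degree = (k * q.natDegree : ℕ) := by
  have hqk : (q ^ k).degree = (k * q.natDegree : ℕ) := by
    rw [Polynomial.degree_pow, Polynomial.degree_eq_natDegree hq]
    simp [Nat.cast_mul]
  have hlt : (p ^ k).degree < (q ^ k).degree := by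
    rw [hqk]
    calc (p ^ k).degree ≤ (k * p.natDegree : ℕ) := by
          rw [Polynomial.degree_pow]
          calc k • p.degree ≤ k • (p.natDegree : WithBot ℕ) := by
                exact nsmul_le_nsmul_right Polynomial.degree_le_natDegree k
            _ = ((k * p.natDegree : ℕ) : WithBot ℕ) := by
                simp [nsmul_eq_mul, Nat.cast_mul]
      _ < (k * q.natDegree : ℕ) := by
          exact_mod_cast (Nat.mul_lt_mul_left hk).mpr h
  rw [Polynomial.degree_sub_eq_left_of_degree_lt hlt, hqk]

/-- Lemma 5.10. For nonzero polynomials with strictly increasing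
degrees `deg p1 < deg p2 < deg p3`, the determinant `Δ_{123}` is nonzero. -/
theorem stmt15 {𝕜 : Type*} [RCLike 𝕜] (n1 n2 n3 : ℕ)
    (hn1 : 1 < n1) (hn12 : n1 < n2) (hn23 : n2 < n3)
    (p1 p2 p3 : Polynomial 𝕜) (hp1 : p1 ≠ 0) (hp2 : p2 ≠ 0) (hp3 : p3 ≠ 0)
    (h12 : p1.natDegree < p2.natDegree) (h23 : p2.natDegree < p3.natDegree) :
    (p2 ^ (n3 - n2) - p1 ^ (n3 - n2)) * (p3 ^ (n3 - n1) - p1 ^ (n3 - n1)) -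
      (p3 ^ (n3 - n2) - p1 ^ (n3 - n2)) * (p2 ^ (n3 - n1) - p1 ^ (n3 - n1)) ≠ 0 := by
  set a := n3 - n2 with ha
  set b := n3 - n1 with hb
  have hapos : 0 < a := by omega
  have hab : a < b := by omega
  set d1 := p1.natDegree
  set d2 := p2.natDegree
  set d3 := p3.natDegree
  have hA : (p2 ^ a - p1 ^ a).degree = (a * d2 : ℕ) :=
    pow_sub_pow_degree p1 p2 hp2 h12 a hapos
  have hB : (p3 ^ b - p1 ^ b).degree = (b * d3 : ℕ) :=
    pow_sub_pow_degree p1 p3 hp3 (lt_trans h12 h23) b (lt_trans hapos hab)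
  have hC : (p3 ^ a - p1 ^ a).degree = (a * d3 : ℕ) :=
    pow_sub_pow_degree p1 p3 hp3 (lt_trans h12 h23) a hapos
  have hD : (p2 ^ b - p1 ^ b).degree = (b * d2 : ℕ) :=
    pow_sub_pow_degree p1 p2 hp2 h12 b (lt_trans hapos hab)
  have hAB : ((p2 ^ a - p1 ^ a) * (p3 ^ b - p1 ^ b)).degree = ((a * d2 + b * d3 : ℕ) : WithBot ℕ) := by
    rw [Polynomial.degree_mul, hA, hB]; norm_cast
  have hCD : ((p3 ^ a - p1 ^ a) * (p2 ^ b - p1 ^ b)).degree = ((a * d3 + b * d2 : ℕ) : WithBot ℕ) := by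
    rw [Polynomial.degree_mul, hC, hD]; norm_cast
  have hlt : ((p3 ^ a - p1 ^ a) * (p2 ^ b - p1 ^ b)).degree <
      ((p2 ^ a - p1 ^ a) * (p3 ^ b - p1 ^ b)).degree := by
    rw [hAB, hCD]
    have : a * d3 + b * d2 < a * d2 + b * d3 := by nlinarith [h23, hab]
    exact_mod_cast this
  intro hzero
  have := Polynomial.degree_sub_eq_left_of_degree_lt hlt
  rw [hzero, Polynomial.degree_zero, hAB] at this
  exact (WithBot.bot_ne_coe this)
end

section
/- Assume (ND) and that there exist at least two distinct solution denominators of degree ≥ 1. Let S denote the (finite) number of solution denominators of degree ≥ 1, and let r be the maximum of their degrees. Then: (a) if a1 < (n1−1)·r − 1 and a2 = (n2−1)·r − 1, then S ≤ n3 − 1; (b) if a1 > (n1−1)·r − 1, a2 = a1 + (n2−n1)·r, and T_r = {2,1}, then S ≤ n3; (c) if a1 > (n1−1)·r − 1, a2 = a1 + (n2−n1)·r, and T_r = {3,2,1}, then S ≤ n3 − n1; (d) if a1 = (n1−1)·r − 1, a2 ≤ (n2−1)·r − 1, and T_r = {2,1,∂}, then S ≤ (n2−1) + 2·(n3−1);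 (e) if a1 = (n1−1)·r − 1, a2 ≤ (n2−1)·r − 1, and T_r = {3,1,∂}, then S ≤ n3 − 1; (f) if a1 = (n1−1)·r − 1, a2 ≤ (n2−1)·r − 1, and T_r = {3,2,1,∂}, then S ≤ n3 − 1. -/
open Polynomial

section AbelAux

open Polynomial

variable {𝕜 : Type*} [Field 𝕜] [CharZero 𝕜]

lemma omin_le (n1 n2 n3 a1 a2 a3 r : ℕ) (ℓ : AbelIdx) :
    Omin n1 n2 n3 a1 a2 a3 r ≤ Phi n1 n2 n3 a1 a2 a3 r ℓ := by
  cases ℓ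
  · exact le_trans (min_le_left _ _) (min_le_left _ _)
  · exact le_trans (min_le_left _ _) (min_le_right _ _)
  · exact le_trans (min_le_right _ _) (min_le_left _ _)
  · exact le_trans (min_le_right _ _) (min_le_right _ _)

lemma mem_tie_iff {n1 n2 n3 a1 a2 a3 r : ℕ} {ℓ : AbelIdx} :
    ℓ ∈ Tie n1 n2 n3 a1 a2 a3 r ↔
      Phi n1 n2 n3 a1 a2 a3 r ℓ = Omin n1 n2 n3 a1 a2 a3 r := by
  simp [Tie]

lemma tie_nonempty (n1 n2 n3 a1 a2 a3 r : ℕ) :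
    (Tie n1 n2 n3 a1 a2 a3 r).Nonempty := by
  obtain h | h := min_choice (min (Phi n1 n2 n3 a1 a2 a3 r .I1) (Phi n1 n2 n3 a1 a2 a3 r .I2))
      (min (Phi n1 n2 n3 a1 a2 a3 r .I3) (Phi n1 n2 n3 a1 a2 a3 r .D))
  · obtain h' | h' := min_choice (Phi n1 n2 n3 a1 a2 a3 r .I1) (Phi n1 n2 n3 a1 a2 a3 r .I2)
    · exact ⟨.I1, mem_tie_iff.mpr (by rw [Omin, h, h'])⟩
    · exact ⟨.I2, mem_tie_iff.mpr (by rw [Omin, h, h'])⟩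
  · obtain h' | h' := min_choice (Phi n1 n2 n3 a1 a2 a3 r .I3) (Phi n1 n2 n3 a1 a2 a3 r .D)
    · exact ⟨.I3, mem_tie_iff.mpr (by rw [Omin, h, h'])⟩
    · exact ⟨.D, mem_tie_iff.mpr (by rw [Omin, h, h'])⟩

/-- coefficient of the geometric-type sum at top degree, and degree bound -/
lemma geom_top {p q : Polynomial 𝕜} {d : ℕ} {c : 𝕜}
    (hp : p.natDegree = d) (hq : q.natDegree = d)
    (hcp : p.leadingCoeff = c) (hcq : q.leadingCoeff = c) (k : ℕ) :
    (∑ i ∈ Finset.range k, p ^ i * q ^ (k - 1 - i)).coeff ((k - 1) * d)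
      = (k : 𝕜) * c ^ (k - 1) ∧
    (∑ i ∈ Finset.range k, p ^ i * q ^ (k - 1 - i)).natDegree ≤ (k - 1) * d := by
  constructor
  · rw [finset_sum_coeff]
    have h : ∀ i ∈ Finset.range k,
        (p ^ i * q ^ (k - 1 - i)).coeff ((k - 1) * d) = c ^ (k - 1) := by
      intro i hi
      rw [Finset.mem_range] at hi
      have h1 : (p ^ i).natDegree = i * d := by rw [natDegree_pow, hp]
      have h2 : (q ^ (k - 1 - i)).natDegree = (k - 1 - i) * d := by rw [natDegree_pow, hq]
      have h3 : (k - 1) * d = (p ^ i).natDegree + (q ^ (k - 1 - i)).natDegree := by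
        rw [h1, h2, ← add_mul]
        congr 1
        omega
      rw [h3, coeff_mul_degree_add_degree, leadingCoeff_pow, leadingCoeff_pow, hcp, hcq,
        ← pow_add]
      congr 1
      omega
    rw [Finset.sum_congr rfl h, Finset.sum_const, Finset.card_range, nsmul_eq_mul]
  · apply natDegree_sum_le_of_forall_le
    intro i hi
    rw [Finset.mem_range] at hi
    refine le_trans (natDegree_mul_le) ?_
    rw [natDegree_pow, natDegree_pow, hp, hq, ← add_mul]
    apply Nat.mul_le_mul_right
    omega

end AbelAux
set_option linter.unusedSectionVars false

lemma sol_key1 {𝕜 : Type*} [Field 𝕜] [CharZero 𝕜] {n1 n2 n3 : ℕ} {A1 A2 A3 : Polynomial 𝕜}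
    (hn1 : 1 < n1) (hn12 : n1 < n2) (hn23 : n2 < n3)
    (hA1 : A1 ≠ 0) (hA2 : A2 ≠ 0) (hA3 : A3 ≠ 0)
    {p : Polynomial 𝕜} (hsol : IsSolDen n1 n2 n3 A1 A2 A3 p) (hd : 1 ≤ p.natDegree) :
    (if AbelIdx.I1 ∈ Tie n1 n2 n3 A1.natDegree A2.natDegree A3.natDegree p.natDegree
      then A1.leadingCoeff * p.leadingCoeff ^ (n3 - n1) else 0) +
    (if AbelIdx.I2 ∈ Tie n1 n2 n3 A1.natDegree A2.natDegree A3.natDegree p.natDegree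
      then A2.leadingCoeff * p.leadingCoeff ^ (n3 - n2) else 0) +
    (if AbelIdx.I3 ∈ Tie n1 n2 n3 A1.natDegree A2.natDegree A3.natDegree p.natDegree
      then A3.leadingCoeff else 0) +
    (if AbelIdx.D ∈ Tie n1 n2 n3 A1.natDegree A2.natDegree A3.natDegree p.natDegree
      then (p.natDegree : 𝕜) * p.leadingCoeff ^ (n3 - 1) else 0) = 0 := by
  obtain ⟨hp, heq⟩ := hsol
  set d := p.natDegree with hdd
  set a1 := A1.natDegree with ha1
  set a2 := A2.natDegree with ha2
  set a3 := A3.natDegree with ha3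
  set c := p.leadingCoeff with hc
  have hc0 : c ≠ 0 := leadingCoeff_ne_zero.mpr hp
  set O := Omin n1 n2 n3 a1 a2 a3 d with hO
  have hOle : ∀ ℓ, O ≤ Phi n1 n2 n3 a1 a2 a3 d ℓ := omin_le n1 n2 n3 a1 a2 a3 d
  have hOD : O ≤ (d : ℤ) + 1 := hOle .D
  have hMnn : (0:ℤ) ≤ (n3:ℤ) * d - O := by
    have h2 : (2:ℤ) ≤ (n3:ℤ) := by exact_mod_cast (by omega : 2 ≤ n3)
    have hd1 : (1:ℤ) ≤ (d:ℤ) := by exact_mod_cast hd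
    nlinarith
  set M := ((n3:ℤ) * d - O).toNat with hMdef
  have hM : (M : ℤ) = (n3:ℤ) * d - O := Int.toNat_of_nonneg hMnn
  have main : ∀ (f : Polynomial 𝕜) (Df : ℕ) (ℓ : AbelIdx) (L : 𝕜), f.natDegree ≤ Df →
      f.coeff Df = L → ((Df : ℤ) = (n3:ℤ) * d - Phi n1 n2 n3 a1 a2 a3 d ℓ) →
      f.coeff M = if ℓ ∈ Tie n1 n2 n3 a1 a2 a3 d then L else 0 := by
    intro f Df ℓ L hdeg hcoeff hφ
    by_cases hmem : ℓ ∈ Tie n1 n2 n3 a1 a2 a3 d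
    · have he : Phi n1 n2 n3 a1 a2 a3 d ℓ = O := mem_tie_iff.mp hmem
      have hDM : (Df : ℤ) = (M : ℤ) := by rw [hM, hφ, he]
      have hDM' : Df = M := by exact_mod_cast hDM
      rw [if_pos hmem, ← hDM', hcoeff]
    · have he : Phi n1 n2 n3 a1 a2 a3 d ℓ ≠ O := fun h => hmem (mem_tie_iff.mpr h)
      have hlt : (Df : ℤ) < (M : ℤ) := by
        rw [hM, hφ]
        have := hOle ℓ
        omega
      rw [if_neg hmem]
      exact coeff_eq_zero_of_natDegree_lt (lt_of_le_of_lt hdeg (by exact_mod_cast hlt))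
  -- derivative facts
  have hderc : (derivative p).coeff (d - 1) = (d : 𝕜) * c := by
    have h1 : d - 1 + 1 = d := by omega
    rw [coeff_derivative, h1, coeff_natDegree]
    have h2 : ((d - 1 : ℕ) : 𝕜) + 1 = (d : 𝕜) := by
      push_cast [Nat.cast_sub hd]
      ring
    rw [h2, mul_comm]
  have hdcast : ((d:ℕ):𝕜) ≠ 0 := Nat.cast_ne_zero.mpr (by omega)
  have hdernz : derivative p ≠ 0 := by
    intro h
    rw [h, coeff_zero] at hderc
    exact (mul_ne_zero hdcast hc0) hderc.symm
  have hderdeg : (derivative p).natDegree = d - 1 := by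
    refine le_antisymm (natDegree_derivative_le p) (le_natDegree_of_ne_zero ?_)
    rw [hderc]
    exact mul_ne_zero hdcast hc0
  have hderlc : (derivative p).leadingCoeff = (d:𝕜) * c := by
    have h := hderc
    rw [← hderdeg] at h
    rw [← coeff_natDegree, h]
  -- the four terms
  have ht0deg : (p ^ (n3-2) * derivative p).natDegree = (n3-2)*d + (d-1) := by
    rw [natDegree_mul (pow_ne_zero _ hp) hdernz, natDegree_pow, hderdeg]
  have ht0coeff : (p ^ (n3-2) * derivative p).coeff ((n3-2)*d + (d-1))
      = c^(n3-2) * ((d:𝕜)*c) := by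
    rw [← ht0deg]
    rw [coeff_natDegree, leadingCoeff_mul, leadingCoeff_pow, hderlc]
  have ht2deg : (A2 * p ^ (n3-n2)).natDegree = a2 + (n3-n2)*d := by
    rw [natDegree_mul hA2 (pow_ne_zero _ hp), natDegree_pow]
  have ht2coeff : (A2 * p ^ (n3-n2)).coeff (a2 + (n3-n2)*d) = A2.leadingCoeff * c^(n3-n2) := by
    rw [← ht2deg, coeff_natDegree, leadingCoeff_mul, leadingCoeff_pow]
  have ht1deg : (A1 * p ^ (n3-n1)).natDegree = a1 + (n3-n1)*d := by
    rw [natDegree_mul hA1 (pow_ne_zero _ hp), natDegree_pow]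
  have ht1coeff : (A1 * p ^ (n3-n1)).coeff (a1 + (n3-n1)*d) = A1.leadingCoeff * c^(n3-n1) := by
    rw [← ht1deg, coeff_natDegree, leadingCoeff_mul, leadingCoeff_pow]
  -- cast identities
  have hD0 : (((n3-2)*d + (d-1) : ℕ) : ℤ) = (n3:ℤ)*d - Phi n1 n2 n3 a1 a2 a3 d .D := by
    simp only [Phi]
    push_cast [Nat.cast_sub (by omega : 2 ≤ n3), Nat.cast_sub hd]
    ring
  have hD3 : ((a3 : ℕ) : ℤ) = (n3:ℤ)*d - Phi n1 n2 n3 a1 a2 a3 d .I3 := by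
    simp only [Phi]; ring
  have hD2 : ((a2 + (n3-n2)*d : ℕ) : ℤ) = (n3:ℤ)*d - Phi n1 n2 n3 a1 a2 a3 d .I2 := by
    simp only [Phi]
    push_cast [Nat.cast_sub (le_of_lt hn23)]
    ring
  have hD1 : ((a1 + (n3-n1)*d : ℕ) : ℤ) = (n3:ℤ)*d - Phi n1 n2 n3 a1 a2 a3 d .I1 := by
    simp only [Phi]
    push_cast [Nat.cast_sub (by omega : n1 ≤ n3)]
    ring
  have hzero : (p ^ (n3 - 2) * derivative p + A3 + A2 * p ^ (n3 - n2)
      + A1 * p ^ (n3 - n1)).coeff M = 0 := by rw [heq, coeff_zero]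
  rw [coeff_add, coeff_add, coeff_add,
      main _ _ .D _ (le_of_eq ht0deg) ht0coeff hD0,
      main _ _ .I3 _ le_rfl coeff_natDegree hD3,
      main _ _ .I2 _ (le_of_eq ht2deg) ht2coeff hD2,
      main _ _ .I1 _ (le_of_eq ht1deg) ht1coeff hD1] at hzero
  have hpow : c^(n3-2) * ((d:𝕜)*c) = (d:𝕜) * c^(n3-1) := by
    have h : c^(n3-1) = c^(n3-2)*c := by
      rw [← pow_succ]
      congr 1
      omega
    rw [h]; ring
  rw [hpow] at hzero
  linear_combination hzero
lemma ite_mul_form {𝕜 : Type*} [Field 𝕜] (P : Prop) [Decidable P] (a : 𝕜) :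
    (if P then a else 0) = (if P then (1:𝕜) else 0) * a := by
  split_ifs <;> simp

lemma sol_admissible {𝕜 : Type*} [Field 𝕜] [CharZero 𝕜] {n1 n2 n3 : ℕ}
    {A1 A2 A3 : Polynomial 𝕜}
    (hn1 : 1 < n1) (hn12 : n1 < n2) (hn23 : n2 < n3)
    (hA1 : A1 ≠ 0) (hA2 : A2 ≠ 0) (hA3 : A3 ≠ 0)
    {p : Polynomial 𝕜} (hsol : IsSolDen n1 n2 n3 A1 A2 A3 p) (hd : 1 ≤ p.natDegree) :
    EdgeAdmissible n1 n2 n3 A1.natDegree A2.natDegree A3.natDegree p.natDegree := by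
  have hkey := sol_key1 hn1 hn12 hn23 hA1 hA2 hA3 hsol hd
  by_contra hcon
  unfold EdgeAdmissible at hcon
  push_neg at hcon
  obtain ⟨ℓ0, hℓ0⟩ := tie_nonempty n1 n2 n3 A1.natDegree A2.natDegree A3.natDegree p.natDegree
  have hsingle : Tie n1 n2 n3 A1.natDegree A2.natDegree A3.natDegree p.natDegree = {ℓ0} := by
    apply Finset.eq_singleton_iff_unique_mem.mpr
    refine ⟨hℓ0, fun x hx => ?_⟩
    by_contra hne
    have : 2 ≤ (Tie n1 n2 n3 A1.natDegree A2.natDegree A3.natDegree p.natDegree).card := by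
      apply Finset.one_lt_card.mpr
      exact ⟨x, hx, ℓ0, hℓ0, hne⟩
    omega
  have hc0 : p.leadingCoeff ≠ 0 := leadingCoeff_ne_zero.mpr hsol.1
  have hα1 : A1.leadingCoeff ≠ 0 := leadingCoeff_ne_zero.mpr hA1
  have hα2 : A2.leadingCoeff ≠ 0 := leadingCoeff_ne_zero.mpr hA2
  have hα3 : A3.leadingCoeff ≠ 0 := leadingCoeff_ne_zero.mpr hA3
  have hdk : ((p.natDegree : ℕ) : 𝕜) ≠ 0 := Nat.cast_ne_zero.mpr (by omega)
  rw [hsingle] at hkey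
  cases ℓ0 <;>
    simp only [Finset.mem_singleton, reduceCtorEq, eq_self_iff_true, if_true, if_false,
      add_zero, zero_add] at hkey
  · exact (mul_ne_zero hα1 (pow_ne_zero _ hc0)) hkey
  · exact (mul_ne_zero hα2 (pow_ne_zero _ hc0)) hkey
  · exact hα3 hkey
  · exact (mul_ne_zero hdk (pow_ne_zero _ hc0)) hkey

lemma sol_root {𝕜 : Type*} [Field 𝕜] [CharZero 𝕜] {n1 n2 n3 : ℕ} {A1 A2 A3 : Polynomial 𝕜}
    (hn1 : 1 < n1) (hn12 : n1 < n2) (hn23 : n2 < n3)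
    (hA1 : A1 ≠ 0) (hA2 : A2 ≠ 0) (hA3 : A3 ≠ 0)
    {p : Polynomial 𝕜} (hsol : IsSolDen n1 n2 n3 A1 A2 A3 p) (hd : 1 ≤ p.natDegree) :
    (edgePoly n1 n2 n3 A1 A2 A3 p.natDegree).IsRoot (p.leadingCoeff)⁻¹ := by
  have hkey := sol_key1 hn1 hn12 hn23 hA1 hA2 hA3 hsol hd
  set d := p.natDegree with hdd
  set c := p.leadingCoeff with hcdef
  have hc0 : c ≠ 0 := leadingCoeff_ne_zero.mpr hsol.1
  have e1 : c^n3 * (c⁻¹)^n1 = c^(n3-n1) := by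
    rw [inv_pow, ← pow_sub₀ c hc0 (by omega : n1 ≤ n3)]
  have e2 : c^n3 * (c⁻¹)^n2 = c^(n3-n2) := by
    rw [inv_pow, ← pow_sub₀ c hc0 (by omega : n2 ≤ n3)]
  have e3 : c^n3 * (c⁻¹)^n3 = 1 := by
    rw [inv_pow]; exact mul_inv_cancel₀ (pow_ne_zero _ hc0)
  have e4 : c^n3 * c⁻¹ = c^(n3-1) := by
    have h : (c⁻¹ : 𝕜) = (c^1)⁻¹ := by rw [pow_one]
    rw [h, ← pow_sub₀ c hc0 (by omega : 1 ≤ n3)]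
  have hmul : c^n3 * (edgePoly n1 n2 n3 A1 A2 A3 d).eval c⁻¹
      = (if AbelIdx.I1 ∈ Tie n1 n2 n3 A1.natDegree A2.natDegree A3.natDegree d
          then A1.leadingCoeff * c ^ (n3 - n1) else 0) +
        (if AbelIdx.I2 ∈ Tie n1 n2 n3 A1.natDegree A2.natDegree A3.natDegree d
          then A2.leadingCoeff * c ^ (n3 - n2) else 0) +
        (if AbelIdx.I3 ∈ Tie n1 n2 n3 A1.natDegree A2.natDegree A3.natDegree d
          then A3.leadingCoeff else 0) +
        (if AbelIdx.D ∈ Tie n1 n2 n3 A1.natDegree A2.natDegree A3.natDegree d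
          then (d : 𝕜) * c ^ (n3 - 1) else 0) := by
    rw [edgePoly]
    simp only [eval_add, apply_ite (eval (c⁻¹ : 𝕜)), eval_zero, eval_mul, eval_pow, eval_C,
      eval_X, eval_natCast]
    rw [ite_mul_form _ (A1.leadingCoeff * (c⁻¹)^n1), ite_mul_form _ (A2.leadingCoeff * (c⁻¹)^n2),
        ite_mul_form _ (A3.leadingCoeff * (c⁻¹)^n3), ite_mul_form _ ((d:𝕜) * c⁻¹),
        ite_mul_form _ (A1.leadingCoeff * c^(n3-n1)), ite_mul_form _ (A2.leadingCoeff * c^(n3-n2)),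
        ite_mul_form _ (A3.leadingCoeff), ite_mul_form _ ((d:𝕜) * c^(n3-1))]
    linear_combination
      ((if AbelIdx.I1 ∈ Tie n1 n2 n3 A1.natDegree A2.natDegree A3.natDegree d then (1:𝕜) else 0)
          * A1.leadingCoeff) * e1 +
      ((if AbelIdx.I2 ∈ Tie n1 n2 n3 A1.natDegree A2.natDegree A3.natDegree d then (1:𝕜) else 0)
          * A2.leadingCoeff) * e2 +
      ((if AbelIdx.I3 ∈ Tie n1 n2 n3 A1.natDegree A2.natDegree A3.natDegree d then (1:𝕜) else 0)
          * A3.leadingCoeff) * e3 +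
      ((if AbelIdx.D ∈ Tie n1 n2 n3 A1.natDegree A2.natDegree A3.natDegree d then (1:𝕜) else 0)
          * (d:𝕜)) * e4
  have h0 : c^n3 * (edgePoly n1 n2 n3 A1 A2 A3 d).eval c⁻¹ = 0 := hmul.trans hkey
  have : (edgePoly n1 n2 n3 A1 A2 A3 d).eval c⁻¹ = 0 :=
    (mul_eq_zero.mp h0).resolve_left (pow_ne_zero _ hc0)
  exact this

lemma sol_gamma {𝕜 : Type*} [Field 𝕜] [CharZero 𝕜] {n1 n2 n3 : ℕ} {A1 A2 A3 : Polynomial 𝕜}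
    (hn1 : 1 < n1) (hn12 : n1 < n2) (hn23 : n2 < n3)
    (hA1 : A1 ≠ 0) (hA2 : A2 ≠ 0) (hA3 : A3 ≠ 0)
    {p : Polynomial 𝕜} (hsol : IsSolDen n1 n2 n3 A1 A2 A3 p) (hd : 1 ≤ p.natDegree) :
    p.natDegree ∈ Gamma n1 n2 n3 A1.natDegree A2.natDegree A3.natDegree := by
  have hadm := sol_admissible hn1 hn12 hn23 hA1 hA2 hA3 hsol hd
  obtain ⟨hp, heq⟩ := hsol
  simp only [Gamma, Set.mem_setOf_eq]
  refine ⟨by omega, ?_, ?_⟩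
  · have h32 : n3 - 2 = (n3-n2) + (n2-2) := by omega
    have h31 : n3 - n1 = (n3-n2) + (n2-n1) := by omega
    have hfac : A3 = p^(n3-n2) * (-(p^(n2-2) * derivative p + A2 + A1 * p^(n2-n1))) := by
      rw [h32, h31, pow_add, pow_add] at heq
      linear_combination heq
    have hB : (-(p^(n2-2) * derivative p + A2 + A1 * p^(n2-n1))) ≠ 0 := by
      intro h
      rw [h, mul_zero] at hfac
      exact hA3 hfac
    have hdm := natDegree_mul (pow_ne_zero (n3-n2) hp) hB
    rw [← hfac, natDegree_pow] at hdm
    have hle : (n3-n2) * p.natDegree ≤ A3.natDegree := by omega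
    have hle' := (Nat.cast_le (α := ℤ)).mpr hle
    push_cast [Nat.cast_sub (le_of_lt hn23)] at hle'
    linarith
  · obtain ⟨x, hx, y, hy, hxy⟩ := Finset.one_lt_card.mp
      (lt_of_lt_of_le one_lt_two hadm)
    have hxyeq : Phi n1 n2 n3 A1.natDegree A2.natDegree A3.natDegree p.natDegree x
        = Phi n1 n2 n3 A1.natDegree A2.natDegree A3.natDegree p.natDegree y := by
      rw [mem_tie_iff.mp hx, mem_tie_iff.mp hy]
    cases x <;> cases y <;> simp only [Phi] at hxyeq
    · exact absurd rfl hxy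
    · exact Or.inr (Or.inr (Or.inl (by linear_combination -hxyeq)))
    · exact Or.inr (Or.inl (by linear_combination -hxyeq))
    · exact Or.inr (Or.inr (Or.inr (Or.inr (Or.inr (by linear_combination hxyeq)))))
    · exact Or.inr (Or.inr (Or.inl (by linear_combination hxyeq)))
    · exact absurd rfl hxy
    · exact Or.inl (by linear_combination -hxyeq)
    · exact Or.inr (Or.inr (Or.inr (Or.inr (Or.inl (by linear_combination hxyeq)))))
    · exact Or.inr (Or.inl (by linear_combination hxyeq))
    · exact Or.inl (by linear_combination hxyeq)
    · exact absurd rfl hxy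
    · exact Or.inr (Or.inr (Or.inr (Or.inl (by linear_combination hxyeq))))
    · exact Or.inr (Or.inr (Or.inr (Or.inr (Or.inr (by linear_combination -hxyeq)))))
    · exact Or.inr (Or.inr (Or.inr (Or.inr (Or.inl (by linear_combination -hxyeq)))))
    · exact Or.inr (Or.inr (Or.inr (Or.inl (by linear_combination -hxyeq))))
    · exact absurd rfl hxy
set_option maxHeartbeats 1600000 in
lemma sol_unique {𝕜 : Type*} [Field 𝕜] [CharZero 𝕜] {n1 n2 n3 : ℕ} {A1 A2 A3 : Polynomial 𝕜}
    (hn1 : 1 < n1) (hn12 : n1 < n2) (hn23 : n2 < n3)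
    (hA1 : A1 ≠ 0) (hA2 : A2 ≠ 0) (hA3 : A3 ≠ 0)
    (hND : ND n1 n2 n3 A1 A2 A3)
    {p q : Polynomial 𝕜} (hsp : IsSolDen n1 n2 n3 A1 A2 A3 p)
    (hsq : IsSolDen n1 n2 n3 A1 A2 A3 q) (hd : 1 ≤ p.natDegree)
    (hdeg : p.natDegree = q.natDegree) (hlc : p.leadingCoeff = q.leadingCoeff) : p = q := by
  by_contra hne
  have hγ := sol_gamma hn1 hn12 hn23 hA1 hA2 hA3 hsp hd
  have hadm := sol_admissible hn1 hn12 hn23 hA1 hA2 hA3 hsp hd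
  have hroot := sol_root hn1 hn12 hn23 hA1 hA2 hA3 hsp hd
  have hR := sol_key1 hn1 hn12 hn23 hA1 hA2 hA3 hsp hd
  set d := p.natDegree with hdd
  set c := p.leadingCoeff with hcc
  have hp0 : p ≠ 0 := hsp.1
  have hq0 : q ≠ 0 := hsq.1
  have hc0 : c ≠ 0 := leadingCoeff_ne_zero.mpr hp0
  have hu0 : p - q ≠ 0 := sub_ne_zero.mpr hne
  set s := (p - q).natDegree with hss
  set us := (p - q).leadingCoeff with husdef
  have hus0 : us ≠ 0 := leadingCoeff_ne_zero.mpr hu0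
  have hsd : s < d := by
    have h1 : (p - q).natDegree ≤ d := by
      refine le_trans (natDegree_sub_le p q) ?_
      rw [← hdeg, max_self]
    have h2 : (p - q).coeff d = 0 := by
      rw [coeff_sub, coeff_natDegree, hdeg, coeff_natDegree, ← hlc, sub_self]
    rcases lt_or_eq_of_le h1 with h | h
    · exact h
    · exfalso
      have := coeff_natDegree (p := p - q)
      rw [h, h2] at this
      exact hus0 this.symm
  -- geometric sums
  have e0 : n3 - 1 - 1 = n3 - 2 := by omega
  obtain ⟨hG0c, hG0d⟩ := geom_top (rfl : p.natDegree = d) hdeg.symm rfl hlc.symm (n3 - 1)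
  obtain ⟨hG2c, hG2d⟩ := geom_top (rfl : p.natDegree = d) hdeg.symm rfl hlc.symm (n3 - n2)
  obtain ⟨hG1c, hG1d⟩ := geom_top (rfl : p.natDegree = d) hdeg.symm rfl hlc.symm (n3 - n1)
  have hg0 := geom_sum₂_mul p q (n3-1)
  rw [e0] at hG0c hG0d hg0
  set G0 := ∑ i ∈ Finset.range (n3 - 1), p ^ i * q ^ (n3 - 2 - i) with hG0def
  set G2 := ∑ i ∈ Finset.range (n3 - n2), p ^ i * q ^ (n3 - n2 - 1 - i) with hG2def
  set G1 := ∑ i ∈ Finset.range (n3 - n1), p ^ i * q ^ (n3 - n1 - 1 - i) with hG1def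
  have hk2 : ((n3 - n2 : ℕ) : 𝕜) ≠ 0 := Nat.cast_ne_zero.mpr (by omega)
  have hk1 : ((n3 - n1 : ℕ) : 𝕜) ≠ 0 := Nat.cast_ne_zero.mpr (by omega)
  have hk0 : ((n3 - 1 : ℕ) : 𝕜) ≠ 0 := Nat.cast_ne_zero.mpr (by omega)
  have hG0ne : G0 ≠ 0 := fun h => by
    rw [h, coeff_zero] at hG0c
    exact (mul_ne_zero hk0 (pow_ne_zero _ hc0)) hG0c.symm
  have hG2ne : G2 ≠ 0 := fun h => by
    rw [h, coeff_zero] at hG2c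
    exact (mul_ne_zero hk2 (pow_ne_zero _ hc0)) hG2c.symm
  have hG1ne : G1 ≠ 0 := fun h => by
    rw [h, coeff_zero] at hG1c
    exact (mul_ne_zero hk1 (pow_ne_zero _ hc0)) hG1c.symm
  have hG0deg : G0.natDegree = (n3-2) * d :=
    le_antisymm hG0d (le_natDegree_of_ne_zero (by
      rw [hG0c]; exact mul_ne_zero hk0 (pow_ne_zero _ hc0)))
  have hG2deg : G2.natDegree = (n3-n2-1) * d :=
    le_antisymm hG2d (le_natDegree_of_ne_zero (by
      rw [hG2c]; exact mul_ne_zero hk2 (pow_ne_zero _ hc0)))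
  have hG1deg : G1.natDegree = (n3-n1-1) * d :=
    le_antisymm hG1d (le_natDegree_of_ne_zero (by
      rw [hG1c]; exact mul_ne_zero hk1 (pow_ne_zero _ hc0)))
  have hG0lc : G0.leadingCoeff = ((n3-1:ℕ):𝕜) * c^(n3-2) := by
    rw [← coeff_natDegree, hG0deg, hG0c]
  have hG2lc : G2.leadingCoeff = ((n3-n2:ℕ):𝕜) * c^(n3-n2-1) := by
    rw [← coeff_natDegree, hG2deg, hG2c]
  have hG1lc : G1.leadingCoeff = ((n3-n1:ℕ):𝕜) * c^(n3-n1-1) := by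
    rw [← coeff_natDegree, hG1deg, hG1c]
  -- the subtracted equation
  have hE : p^(n3-2) * derivative p - q^(n3-2) * derivative q
      + A2 * (p^(n3-n2) - q^(n3-n2)) + A1 * (p^(n3-n1) - q^(n3-n1)) = 0 := by
    have h1 := hsp.2
    have h2 := hsq.2
    linear_combination h1 - h2
  have e1 : n3 - 1 - 1 = n3 - 2 := e0
  have hderp : derivative (p^(n3-1)) = C ((n3-1:ℕ):𝕜) * (p^(n3-2) * derivative p) := by
    rw [derivative_pow, e1, mul_assoc]
  have hderq : derivative (q^(n3-1)) = C ((n3-1:ℕ):𝕜) * (q^(n3-2) * derivative q) := by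
    rw [derivative_pow, e1, mul_assoc]
  have hg2 : G2 * (p - q) = p^(n3-n2) - q^(n3-n2) := geom_sum₂_mul p q (n3-n2)
  have hg1 : G1 * (p - q) = p^(n3-n1) - q^(n3-n1) := geom_sum₂_mul p q (n3-n1)
  have hE3 : derivative (G0 * (p - q)) + C ((n3-1:ℕ):𝕜) * (A2 * (G2 * (p - q)))
      + C ((n3-1:ℕ):𝕜) * (A1 * (G1 * (p - q))) = 0 := by
    rw [hg0, hg2, hg1, derivative_sub, hderp, hderq]
    linear_combination (C ((n3-1:ℕ):𝕜)) * hE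
  -- coefficient extraction setup
  set O := Omin n1 n2 n3 A1.natDegree A2.natDegree A3.natDegree d with hO
  have hOle : ∀ ℓ, O ≤ Phi n1 n2 n3 A1.natDegree A2.natDegree A3.natDegree d ℓ :=
    omin_le n1 n2 n3 _ _ _ d
  have hOD : O ≤ (d : ℤ) + 1 := hOle .D
  have hMnn : (0:ℤ) ≤ (n3:ℤ)*d + s - d - O := by
    have h2 : (2:ℤ) ≤ (n3:ℤ) := by exact_mod_cast (by omega : 2 ≤ n3)
    have hd1 : (1:ℤ) ≤ (d:ℤ) := by exact_mod_cast hd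
    have hs0 : (0:ℤ) ≤ (s:ℤ) := Int.natCast_nonneg s
    nlinarith
  set M := ((n3:ℤ)*d + s - d - O).toNat with hMdef
  have hM : (M : ℤ) = (n3:ℤ)*d + s - d - O := Int.toNat_of_nonneg hMnn
  have main2 : ∀ (f : Polynomial 𝕜) (Df : ℕ) (ℓ : AbelIdx) (L : 𝕜), f.natDegree ≤ Df →
      f.coeff Df = L →
      ((Df : ℤ) = (n3:ℤ)*d + s - d - Phi n1 n2 n3 A1.natDegree A2.natDegree A3.natDegree d ℓ) →
      f.coeff M = if ℓ ∈ Tie n1 n2 n3 A1.natDegree A2.natDegree A3.natDegree d then L else 0 := by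
    intro f Df ℓ L hdegf hcoeff hφ
    by_cases hmem : ℓ ∈ Tie n1 n2 n3 A1.natDegree A2.natDegree A3.natDegree d
    · have he : Phi n1 n2 n3 A1.natDegree A2.natDegree A3.natDegree d ℓ = O := mem_tie_iff.mp hmem
      have hDM : (Df : ℤ) = (M : ℤ) := by rw [hM, hφ, he]
      have hDM' : Df = M := by exact_mod_cast hDM
      rw [if_pos hmem, ← hDM', hcoeff]
    · have he : Phi n1 n2 n3 A1.natDegree A2.natDegree A3.natDegree d ℓ ≠ O :=
        fun h => hmem (mem_tie_iff.mpr h)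
      have hlt : (Df : ℤ) < (M : ℤ) := by
        rw [hM, hφ]
        have := hOle ℓ
        omega
      rw [if_neg hmem]
      exact coeff_eq_zero_of_natDegree_lt (lt_of_le_of_lt hdegf (by exact_mod_cast hlt))
  -- term 0 (derivative term)
  have hm0 : (G0 * (p - q)).natDegree = (n3-2)*d + s := by
    rw [natDegree_mul hG0ne hu0, hG0deg]
  have hm0c : (G0 * (p - q)).coeff ((n3-2)*d + s) = ((n3-1:ℕ):𝕜) * c^(n3-2) * us := by
    rw [← hm0, coeff_natDegree, leadingCoeff_mul, hG0lc]
  have hpos0 : 1 ≤ (n3-2)*d + s := by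
    have : 1 ≤ (n3-2)*d := Nat.one_le_iff_ne_zero.mpr (Nat.mul_ne_zero (by omega) (by omega))
    omega
  have ht0deg : (derivative (G0 * (p - q))).natDegree ≤ (n3-2)*d + s - 1 := by
    refine le_trans (natDegree_derivative_le _) ?_
    rw [hm0]
  have ht0coeff : (derivative (G0 * (p - q))).coeff ((n3-2)*d + s - 1)
      = (((n3-2)*d + s : ℕ):𝕜) * (((n3-1:ℕ):𝕜) * c^(n3-2) * us) := by
    rw [coeff_derivative]
    have e2 : (n3-2)*d + s - 1 + 1 = (n3-2)*d + s := by omega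
    rw [e2, hm0c]
    have e3 : (((n3-2)*d + s - 1 : ℕ):𝕜) + 1 = (((n3-2)*d + s : ℕ):𝕜) := by
      push_cast [Nat.cast_sub hpos0]
      ring
    rw [e3]
    ring
  -- term 2
  have hm2 : (G2 * (p - q)).natDegree = (n3-n2-1)*d + s := by
    rw [natDegree_mul hG2ne hu0, hG2deg]
  have hm2c : (G2 * (p - q)).coeff ((n3-n2-1)*d + s) = ((n3-n2:ℕ):𝕜) * c^(n3-n2-1) * us := by
    rw [← hm2, coeff_natDegree, leadingCoeff_mul, hG2lc]
  have ht2deg : (C ((n3-1:ℕ):𝕜) * (A2 * (G2 * (p - q)))).natDegree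
      ≤ A2.natDegree + ((n3-n2-1)*d + s) := by
    refine le_trans (natDegree_C_mul_le _ _) (le_trans natDegree_mul_le ?_)
    rw [hm2]
  have ht2coeff : (C ((n3-1:ℕ):𝕜) * (A2 * (G2 * (p - q)))).coeff (A2.natDegree + ((n3-n2-1)*d + s))
      = ((n3-1:ℕ):𝕜) * (A2.leadingCoeff * (((n3-n2:ℕ):𝕜) * c^(n3-n2-1) * us)) := by
    rw [coeff_C_mul]
    congr 1
    have : A2.natDegree + ((n3-n2-1)*d + s) = A2.natDegree + (G2 * (p - q)).natDegree := by
      rw [hm2]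
    rw [this, coeff_mul_degree_add_degree, ← hm2c, ← hm2, coeff_natDegree]
  -- term 1
  have hm1 : (G1 * (p - q)).natDegree = (n3-n1-1)*d + s := by
    rw [natDegree_mul hG1ne hu0, hG1deg]
  have hm1c : (G1 * (p - q)).coeff ((n3-n1-1)*d + s) = ((n3-n1:ℕ):𝕜) * c^(n3-n1-1) * us := by
    rw [← hm1, coeff_natDegree, leadingCoeff_mul, hG1lc]
  have ht1deg : (C ((n3-1:ℕ):𝕜) * (A1 * (G1 * (p - q)))).natDegree
      ≤ A1.natDegree + ((n3-n1-1)*d + s) := by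
    refine le_trans (natDegree_C_mul_le _ _) (le_trans natDegree_mul_le ?_)
    rw [hm1]
  have ht1coeff : (C ((n3-1:ℕ):𝕜) * (A1 * (G1 * (p - q)))).coeff (A1.natDegree + ((n3-n1-1)*d + s))
      = ((n3-1:ℕ):𝕜) * (A1.leadingCoeff * (((n3-n1:ℕ):𝕜) * c^(n3-n1-1) * us)) := by
    rw [coeff_C_mul]
    congr 1
    have : A1.natDegree + ((n3-n1-1)*d + s) = A1.natDegree + (G1 * (p - q)).natDegree := by
      rw [hm1]
    rw [this, coeff_mul_degree_add_degree, ← hm1c, ← hm1, coeff_natDegree]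
  -- cast identities for the degrees
  have hDc0 : (((n3-2)*d + s - 1 : ℕ) : ℤ)
      = (n3:ℤ)*d + s - d - Phi n1 n2 n3 A1.natDegree A2.natDegree A3.natDegree d .D := by
    simp only [Phi]
    push_cast [Nat.cast_sub hpos0, Nat.cast_sub (by omega : 2 ≤ n3)]
    ring
  have hDc2 : ((A2.natDegree + ((n3-n2-1)*d + s) : ℕ) : ℤ)
      = (n3:ℤ)*d + s - d - Phi n1 n2 n3 A1.natDegree A2.natDegree A3.natDegree d .I2 := by
    simp only [Phi]
    push_cast [Nat.cast_sub (by omega : 1 ≤ n3 - n2), Nat.cast_sub (by omega : n2 ≤ n3)]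
    ring
  have hDc1 : ((A1.natDegree + ((n3-n1-1)*d + s) : ℕ) : ℤ)
      = (n3:ℤ)*d + s - d - Phi n1 n2 n3 A1.natDegree A2.natDegree A3.natDegree d .I1 := by
    simp only [Phi]
    push_cast [Nat.cast_sub (by omega : 1 ≤ n3 - n1), Nat.cast_sub (by omega : n1 ≤ n3)]
    ring
  -- extract coefficient of hE3 at M
  have hstar : (if AbelIdx.D ∈ Tie n1 n2 n3 A1.natDegree A2.natDegree A3.natDegree d
        then (((n3-2)*d + s : ℕ):𝕜) * (((n3-1:ℕ):𝕜) * c^(n3-2) * us) else 0)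
      + (if AbelIdx.I2 ∈ Tie n1 n2 n3 A1.natDegree A2.natDegree A3.natDegree d
        then ((n3-1:ℕ):𝕜) * (A2.leadingCoeff * (((n3-n2:ℕ):𝕜) * c^(n3-n2-1) * us)) else 0)
      + (if AbelIdx.I1 ∈ Tie n1 n2 n3 A1.natDegree A2.natDegree A3.natDegree d
        then ((n3-1:ℕ):𝕜) * (A1.leadingCoeff * (((n3-n1:ℕ):𝕜) * c^(n3-n1-1) * us)) else 0)
      = 0 := by
    have hz : (derivative (G0 * (p - q)) + C ((n3-1:ℕ):𝕜) * (A2 * (G2 * (p - q)))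
        + C ((n3-1:ℕ):𝕜) * (A1 * (G1 * (p - q)))).coeff M = 0 := by
      rw [hE3, coeff_zero]
    rw [coeff_add, coeff_add,
        main2 _ _ .D _ ht0deg ht0coeff hDc0,
        main2 _ _ .I2 _ ht2deg ht2coeff hDc2,
        main2 _ _ .I1 _ ht1deg ht1coeff hDc1] at hz
    exact hz
  -- normalize powers
  have g0 : c^(n3-2) * c = c^(n3-1) := by rw [← pow_succ]; congr 1; omega
  have g2 : c^(n3-n2-1) * c = c^(n3-n2) := by rw [← pow_succ]; congr 1; omega
  have g1 : c^(n3-n1-1) * c = c^(n3-n1) := by rw [← pow_succ]; congr 1; omega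
  rw [← g0, ← g2, ← g1] at hR
  rw [ite_mul_form _ (A1.leadingCoeff * (c^(n3-n1-1)*c)),
      ite_mul_form _ (A2.leadingCoeff * (c^(n3-n2-1)*c)),
      ite_mul_form _ (A3.leadingCoeff),
      ite_mul_form _ ((d:𝕜) * (c^(n3-2)*c))] at hR
  rw [ite_mul_form _ ((((n3-2)*d + s : ℕ):𝕜) * (((n3-1:ℕ):𝕜) * c^(n3-2) * us)),
      ite_mul_form _ (((n3-1:ℕ):𝕜) * (A2.leadingCoeff * (((n3-n2:ℕ):𝕜) * c^(n3-n2-1) * us))),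
      ite_mul_form _ (((n3-1:ℕ):𝕜) * (A1.leadingCoeff * (((n3-n1:ℕ):𝕜) * c^(n3-n1-1) * us)))]
    at hstar
  have hB' : (if AbelIdx.D ∈ Tie n1 n2 n3 A1.natDegree A2.natDegree A3.natDegree d
        then (1:𝕜) else 0) * ((((n3-2)*d + s:ℕ):𝕜) * (c^(n3-2)*c))
      + (if AbelIdx.I2 ∈ Tie n1 n2 n3 A1.natDegree A2.natDegree A3.natDegree d
        then (1:𝕜) else 0) * (A2.leadingCoeff * (((n3-n2:ℕ):𝕜) * (c^(n3-n2-1)*c)))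
      + (if AbelIdx.I1 ∈ Tie n1 n2 n3 A1.natDegree A2.natDegree A3.natDegree d
        then (1:𝕜) else 0) * (A1.leadingCoeff * (((n3-n1:ℕ):𝕜) * (c^(n3-n1-1)*c))) = 0 := by
    have h : ((if AbelIdx.D ∈ Tie n1 n2 n3 A1.natDegree A2.natDegree A3.natDegree d
          then (1:𝕜) else 0) * ((((n3-2)*d + s:ℕ):𝕜) * (c^(n3-2)*c))
        + (if AbelIdx.I2 ∈ Tie n1 n2 n3 A1.natDegree A2.natDegree A3.natDegree d
          then (1:𝕜) else 0) * (A2.leadingCoeff * (((n3-n2:ℕ):𝕜) * (c^(n3-n2-1)*c)))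
        + (if AbelIdx.I1 ∈ Tie n1 n2 n3 A1.natDegree A2.natDegree A3.natDegree d
          then (1:𝕜) else 0) * (A1.leadingCoeff * (((n3-n1:ℕ):𝕜) * (c^(n3-n1-1)*c))))
        * (((n3-1:ℕ):𝕜) * us) = 0 := by
      linear_combination c * hstar
    exact (mul_eq_zero.mp h).resolve_right (mul_ne_zero hk0 hus0)
  -- eval of the derivative of the edge polynomial
  have f1 : c^(n3-1) * (c⁻¹)^(n1-1) = c^(n3-n1) := by
    rw [inv_pow, ← pow_sub₀ c hc0 (by omega : n1-1 ≤ n3-1)]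
    congr 1
    omega
  have f2 : c^(n3-1) * (c⁻¹)^(n2-1) = c^(n3-n2) := by
    rw [inv_pow, ← pow_sub₀ c hc0 (by omega : n2-1 ≤ n3-1)]
    congr 1
    omega
  have f3 : c^(n3-1) * (c⁻¹)^(n3-1) = 1 := by
    rw [inv_pow]; exact mul_inv_cancel₀ (pow_ne_zero _ hc0)
  have hV : c^(n3-1) * (derivative (edgePoly n1 n2 n3 A1 A2 A3 d)).eval c⁻¹
      = (if AbelIdx.I1 ∈ Tie n1 n2 n3 A1.natDegree A2.natDegree A3.natDegree d
          then (1:𝕜) else 0) * (A1.leadingCoeff * ((n1:𝕜) * c^(n3-n1)))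
      + (if AbelIdx.I2 ∈ Tie n1 n2 n3 A1.natDegree A2.natDegree A3.natDegree d
          then (1:𝕜) else 0) * (A2.leadingCoeff * ((n2:𝕜) * c^(n3-n2)))
      + (if AbelIdx.I3 ∈ Tie n1 n2 n3 A1.natDegree A2.natDegree A3.natDegree d
          then (1:𝕜) else 0) * (A3.leadingCoeff * (n3:𝕜))
      + (if AbelIdx.D ∈ Tie n1 n2 n3 A1.natDegree A2.natDegree A3.natDegree d
          then (1:𝕜) else 0) * ((d:𝕜) * c^(n3-1)) := by
    rw [edgePoly]
    simp only [derivative_add, apply_ite derivative, derivative_zero, derivative_C, derivative_C_mul,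
      derivative_X_pow, derivative_mul, derivative_natCast, derivative_X, zero_mul, zero_add,
      mul_one, eval_add, apply_ite (eval (c⁻¹:𝕜)), eval_zero, eval_mul, eval_C, eval_pow,
      eval_X, eval_natCast]
    split_ifs <;>
    first
      | linear_combination (A1.leadingCoeff * (n1:𝕜)) * f1 + (A2.leadingCoeff * (n2:𝕜)) * f2
          + (A3.leadingCoeff * (n3:𝕜)) * f3
      | linear_combination (A1.leadingCoeff * (n1:𝕜)) * f1 + (A2.leadingCoeff * (n2:𝕜)) * f2
      | linear_combination (A1.leadingCoeff * (n1:𝕜)) * f1 + (A3.leadingCoeff * (n3:𝕜)) * f3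
      | linear_combination (A2.leadingCoeff * (n2:𝕜)) * f2 + (A3.leadingCoeff * (n3:𝕜)) * f3
      | linear_combination (A1.leadingCoeff * (n1:𝕜)) * f1
      | linear_combination (A2.leadingCoeff * (n2:𝕜)) * f2
      | linear_combination (A3.leadingCoeff * (n3:𝕜)) * f3
      | ring
  rw [← g0, ← g2, ← g1] at hV
  push_cast [Nat.cast_sub (by omega : 2 ≤ n3), Nat.cast_sub (by omega : n2 ≤ n3),
    Nat.cast_sub (by omega : n1 ≤ n3)] at hB'
  obtain ⟨hND1, hND2, hND3⟩ := hND d hγ hadm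
  have hCne : (c⁻¹ : 𝕜) ≠ 0 := inv_ne_zero hc0
  by_cases hD : AbelIdx.D ∈ Tie n1 n2 n3 A1.natDegree A2.natDegree A3.natDegree d
  · have hεD : (if AbelIdx.D ∈ Tie n1 n2 n3 A1.natDegree A2.natDegree A3.natDegree d
        then (1:𝕜) else 0) = 1 := if_pos hD
    apply hND2 hD c⁻¹ hCne hroot (d - s) (by omega)
    have hmd : ((d - s:ℕ):𝕜) = (d:𝕜) - s := by
      push_cast [Nat.cast_sub (le_of_lt hsd)]
      ring
    have hkey2 : (c^(n3-2)*c) * ((derivative (edgePoly n1 n2 n3 A1 A2 A3 d)).eval c⁻¹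
        + ((d - s:ℕ):𝕜)) = 0 := by
      rw [hmd]
      linear_combination hV + (n3:𝕜) * hR - hB'
        - ((d:𝕜)-(s:𝕜))*(c^(n3-2)*c) * hεD
    exact (mul_eq_zero.mp hkey2).resolve_left (mul_ne_zero (pow_ne_zero _ hc0) hc0)
  · have hεD : (if AbelIdx.D ∈ Tie n1 n2 n3 A1.natDegree A2.natDegree A3.natDegree d
        then (1:𝕜) else 0) = 0 := if_neg hD
    apply hND1 c⁻¹ hCne hroot
    have hkey2 : (c^(n3-2)*c) * ((derivative (edgePoly n1 n2 n3 A1 A2 A3 d)).eval c⁻¹) = 0 := by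
      linear_combination hV + (n3:𝕜) * hR - hB'
        - ((d:𝕜)-(s:𝕜))*(c^(n3-2)*c) * hεD
    exact (mul_eq_zero.mp hkey2).resolve_left (mul_ne_zero (pow_ne_zero _ hc0) hc0)
def abelSlope (n1 n2 n3 : ℕ) : AbelIdx → ℕ
  | .I1 => n1
  | .I2 => n2
  | .I3 => n3
  | .D  => 1

lemma phi_shift (n1 n2 n3 a1 a2 a3 r d : ℕ) (ℓ : AbelIdx) :
    Phi n1 n2 n3 a1 a2 a3 d ℓ
      = Phi n1 n2 n3 a1 a2 a3 r ℓ - (abelSlope n1 n2 n3 ℓ : ℤ) * ((r:ℤ) - d) := by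
  cases ℓ <;> simp [Phi, abelSlope] <;> ring

lemma not_tie_small {n1 n2 n3 a1 a2 a3 r d : ℕ} {ℓ ℓ' : AbelIdx}
    (hd : d < r)
    (hφ : Phi n1 n2 n3 a1 a2 a3 r ℓ' ≤ Phi n1 n2 n3 a1 a2 a3 r ℓ)
    (hsl : abelSlope n1 n2 n3 ℓ < abelSlope n1 n2 n3 ℓ') :
    ℓ ∉ Tie n1 n2 n3 a1 a2 a3 d := by
  intro hmem
  have h1 := mem_tie_iff.mp hmem
  have h2 := omin_le n1 n2 n3 a1 a2 a3 d ℓ'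
  rw [← h1] at h2
  have key : Phi n1 n2 n3 a1 a2 a3 d ℓ' < Phi n1 n2 n3 a1 a2 a3 d ℓ := by
    rw [phi_shift n1 n2 n3 a1 a2 a3 r d ℓ, phi_shift n1 n2 n3 a1 a2 a3 r d ℓ']
    have hsl' : (abelSlope n1 n2 n3 ℓ : ℤ) < (abelSlope n1 n2 n3 ℓ' : ℤ) := by exact_mod_cast hsl
    have hrd : (0:ℤ) < (r:ℤ) - (d:ℤ) := by
      have : (d:ℤ) < (r:ℤ) := by exact_mod_cast hd
      omega
    nlinarith
  omega

lemma edgePoly_coeff {𝕜 : Type*} [Field 𝕜] {n1 n2 n3 : ℕ} {A1 A2 A3 : Polynomial 𝕜} (d n : ℕ) :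
    (edgePoly n1 n2 n3 A1 A2 A3 d).coeff n =
      (if AbelIdx.I1 ∈ Tie n1 n2 n3 A1.natDegree A2.natDegree A3.natDegree d
        then (if n = n1 then A1.leadingCoeff else 0) else 0) +
      (if AbelIdx.I2 ∈ Tie n1 n2 n3 A1.natDegree A2.natDegree A3.natDegree d
        then (if n = n2 then A2.leadingCoeff else 0) else 0) +
      (if AbelIdx.I3 ∈ Tie n1 n2 n3 A1.natDegree A2.natDegree A3.natDegree d
        then (if n = n3 then A3.leadingCoeff else 0) else 0) +
      (if AbelIdx.D ∈ Tie n1 n2 n3 A1.natDegree A2.natDegree A3.natDegree d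
        then (if n = 1 then (d:𝕜) else 0) else 0) := by
  rw [edgePoly,
    show ((d:ℕ) : Polynomial 𝕜) * X = C ((d:ℕ):𝕜) * X^1 by rw [map_natCast, pow_one]]
  simp only [coeff_add, apply_ite (fun f : Polynomial 𝕜 => f.coeff n), coeff_zero, coeff_C_mul,
    coeff_X_pow, mul_ite, mul_one, mul_zero]

lemma edgePoly_ne_zero {𝕜 : Type*} [Field 𝕜] {n1 n2 n3 : ℕ} {A1 A2 A3 : Polynomial 𝕜}
    (hn1 : 1 < n1) (hn12 : n1 < n2) (hn23 : n2 < n3)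
    (hA1 : A1 ≠ 0) (hA2 : A2 ≠ 0) (hA3 : A3 ≠ 0) (d : ℕ)
    (hadm : EdgeAdmissible n1 n2 n3 A1.natDegree A2.natDegree A3.natDegree d) :
    edgePoly n1 n2 n3 A1 A2 A3 d ≠ 0 := by
  obtain ⟨x, hx, y, hy, hxy⟩ := Finset.one_lt_card.mp (lt_of_lt_of_le one_lt_two hadm)
  have hex : ∃ ℓ ∈ Tie n1 n2 n3 A1.natDegree A2.natDegree A3.natDegree d, ℓ ≠ AbelIdx.D := by
    by_cases hxD : x = AbelIdx.D
    · refine ⟨y, hy, fun h => hxy ?_⟩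
      rw [hxD, h]
    · exact ⟨x, hx, hxD⟩
  obtain ⟨ℓ, hℓ, hℓD⟩ := hex
  intro hzero
  have hα1 : A1.leadingCoeff ≠ 0 := leadingCoeff_ne_zero.mpr hA1
  have hα2 : A2.leadingCoeff ≠ 0 := leadingCoeff_ne_zero.mpr hA2
  have hα3 : A3.leadingCoeff ≠ 0 := leadingCoeff_ne_zero.mpr hA3
  cases ℓ with
  | I1 =>
    have h := edgePoly_coeff (𝕜 := 𝕜) (n1 := n1) (n2 := n2) (n3 := n3)
      (A1 := A1) (A2 := A2) (A3 := A3) d n1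
    rw [hzero, coeff_zero, if_pos rfl, if_neg (by omega : ¬ n1 = n2),
      if_neg (by omega : ¬ n1 = n3), if_neg (by omega : ¬ n1 = 1), if_pos hℓ] at h
    simp only [ite_self, add_zero, zero_add] at h
    exact hα1 h.symm
  | I2 =>
    have h := edgePoly_coeff (𝕜 := 𝕜) (n1 := n1) (n2 := n2) (n3 := n3)
      (A1 := A1) (A2 := A2) (A3 := A3) d n2
    rw [hzero, coeff_zero, if_pos rfl, if_neg (by omega : ¬ n2 = n1),
      if_neg (by omega : ¬ n2 = n3), if_neg (by omega : ¬ n2 = 1), if_pos hℓ] at h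
    simp only [ite_self, add_zero, zero_add] at h
    exact hα2 h.symm
  | I3 =>
    have h := edgePoly_coeff (𝕜 := 𝕜) (n1 := n1) (n2 := n2) (n3 := n3)
      (A1 := A1) (A2 := A2) (A3 := A3) d n3
    rw [hzero, coeff_zero, if_pos rfl, if_neg (by omega : ¬ n3 = n1),
      if_neg (by omega : ¬ n3 = n2), if_neg (by omega : ¬ n3 = 1), if_pos hℓ] at h
    simp only [ite_self, add_zero, zero_add] at h
    exact hα3 h.symm
  | D => exact hℓD rfl

lemma root_set_ncard {𝕜 : Type*} [Field 𝕜] {Q : Polynomial 𝕜} (hQ : Q ≠ 0) :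
    {x : 𝕜 | Q.IsRoot x}.ncard ≤ Q.natDegree := by
  classical
  have h : {x : 𝕜 | Q.IsRoot x} = ↑Q.roots.toFinset := by
    ext x
    simp [Multiset.mem_toFinset, mem_roots hQ]
  rw [h, Set.ncard_coe_finset]
  exact le_trans (Multiset.toFinset_card_le _) (card_roots' Q)

lemma sol_degree_finite {𝕜 : Type*} [Field 𝕜] [CharZero 𝕜] {n1 n2 n3 : ℕ}
    {A1 A2 A3 : Polynomial 𝕜}
    (hn1 : 1 < n1) (hn12 : n1 < n2) (hn23 : n2 < n3)
    (hA1 : A1 ≠ 0) (hA2 : A2 ≠ 0) (hA3 : A3 ≠ 0)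
    (hND : ND n1 n2 n3 A1 A2 A3) (d : ℕ) :
    {p : Polynomial 𝕜 | IsSolDen n1 n2 n3 A1 A2 A3 p ∧ 1 ≤ p.natDegree
      ∧ p.natDegree = d}.Finite := by
  set S := {p : Polynomial 𝕜 | IsSolDen n1 n2 n3 A1 A2 A3 p ∧ 1 ≤ p.natDegree
      ∧ p.natDegree = d} with hS
  rcases Set.eq_empty_or_nonempty S with h | ⟨p0, hp0⟩
  · rw [h]; exact Set.finite_empty
  · obtain ⟨hsol0, hd0, hdeg0⟩ := hp0
    have hadm := sol_admissible hn1 hn12 hn23 hA1 hA2 hA3 hsol0 hd0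
    rw [hdeg0] at hadm
    have hPne := edgePoly_ne_zero hn1 hn12 hn23 hA1 hA2 hA3 d hadm
    have hinj : Set.InjOn (fun p : Polynomial 𝕜 => (p.leadingCoeff)⁻¹) S := by
      intro p hp q hq hfeq
      have hlc : p.leadingCoeff = q.leadingCoeff := inv_injective hfeq
      exact sol_unique hn1 hn12 hn23 hA1 hA2 hA3 hND hp.1 hq.1 hp.2.1
        (hp.2.2.trans hq.2.2.symm) hlc
    apply Set.Finite.of_finite_image _ hinj
    apply Set.Finite.subset (Polynomial.finite_setOf_isRoot hPne)
    rintro x ⟨p, hp, rfl⟩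
    have := sol_root hn1 hn12 hn23 hA1 hA2 hA3 hp.1 hp.2.1
    rw [hp.2.2] at this
    exact this

lemma count_degree {𝕜 : Type*} [Field 𝕜] [CharZero 𝕜] {n1 n2 n3 : ℕ}
    {A1 A2 A3 : Polynomial 𝕜}
    (hn1 : 1 < n1) (hn12 : n1 < n2) (hn23 : n2 < n3)
    (hA1 : A1 ≠ 0) (hA2 : A2 ≠ 0) (hA3 : A3 ≠ 0)
    (hND : ND n1 n2 n3 A1 A2 A3) (d : ℕ) (Q : Polynomial 𝕜) (hQ : Q ≠ 0)
    (hroot : ∀ x : 𝕜, x ≠ 0 → (edgePoly n1 n2 n3 A1 A2 A3 d).IsRoot x → Q.IsRoot x) :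
    {p : Polynomial 𝕜 | IsSolDen n1 n2 n3 A1 A2 A3 p ∧ 1 ≤ p.natDegree
      ∧ p.natDegree = d}.ncard ≤ Q.natDegree := by
  refine le_trans (Set.ncard_le_ncard_of_injOn
    (fun p : Polynomial 𝕜 => (p.leadingCoeff)⁻¹) ?_ ?_
    (Polynomial.finite_setOf_isRoot hQ)) (root_set_ncard hQ)
  · rintro p ⟨hsol, hd1, hdeg⟩
    have hr := sol_root hn1 hn12 hn23 hA1 hA2 hA3 hsol hd1
    rw [hdeg] at hr
    exact hroot _ (inv_ne_zero (leadingCoeff_ne_zero.mpr hsol.1)) hr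
  · intro p hp q hq hfeq
    have hlc : p.leadingCoeff = q.leadingCoeff := inv_injective hfeq
    exact sol_unique hn1 hn12 hn23 hA1 hA2 hA3 hND hp.1 hq.1 hp.2.1
      (hp.2.2.trans hq.2.2.symm) hlc

lemma solS_subsingleton {𝕜 : Type*} [Field 𝕜] [CharZero 𝕜] {n1 n2 n3 : ℕ}
    {A1 A2 A3 : Polynomial 𝕜}
    (hn1 : 1 < n1) (hn12 : n1 < n2) (hn23 : n2 < n3)
    (hA1 : A1 ≠ 0) (hA2 : A2 ≠ 0) (hA3 : A3 ≠ 0)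
    (hND : ND n1 n2 n3 A1 A2 A3) (r : ℕ)
    (hsmall : ∀ p : Polynomial 𝕜, IsSolDen n1 n2 n3 A1 A2 A3 p → 1 ≤ p.natDegree →
      p.natDegree < r → Tie n1 n2 n3 A1.natDegree A2.natDegree A3.natDegree p.natDegree
        = {AbelIdx.I3, AbelIdx.I2}) :
    {p : Polynomial 𝕜 | IsSolDen n1 n2 n3 A1 A2 A3 p ∧ 1 ≤ p.natDegree
      ∧ p.natDegree < r}.Subsingleton := by
  intro p hp q hq
  obtain ⟨hsp, hdp, hltp⟩ := hp
  obtain ⟨hsq, hdq, hltq⟩ := hq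
  have hTp := hsmall p hsp hdp hltp
  have hTq := hsmall q hsq hdq hltq
  have hmem23 : ∀ (u : Polynomial 𝕜),
      Tie n1 n2 n3 A1.natDegree A2.natDegree A3.natDegree u.natDegree
        = {AbelIdx.I3, AbelIdx.I2} →
      (n2:ℤ) * u.natDegree - A2.natDegree = (n3:ℤ) * u.natDegree - A3.natDegree := by
    intro u hT
    have h2 : AbelIdx.I2 ∈ Tie n1 n2 n3 A1.natDegree A2.natDegree A3.natDegree u.natDegree := by
      rw [hT]; simp
    have h3 : AbelIdx.I3 ∈ Tie n1 n2 n3 A1.natDegree A2.natDegree A3.natDegree u.natDegree := by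
      rw [hT]; simp
    have e2 := mem_tie_iff.mp h2
    have e3 := mem_tie_iff.mp h3
    simp only [Phi] at e2 e3
    rw [e2, e3]
  have hep := hmem23 p hTp
  have heq' := hmem23 q hTq
  have hdegeq : p.natDegree = q.natDegree := by
    have hne : ((n3:ℤ) - n2) ≠ 0 := by
      have : (n2:ℤ) < n3 := by exact_mod_cast hn23
      omega
    have : ((n3:ℤ) - n2) * p.natDegree = ((n3:ℤ) - n2) * q.natDegree := by ring_nf; linarith
    have := mul_left_cancel₀ hne this
    exact_mod_cast this
  by_cases hC : p.leadingCoeff = q.leadingCoeff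
  · exact sol_unique hn1 hn12 hn23 hA1 hA2 hA3 hND hsp hsq hdp hdegeq hC
  · exfalso
    have hγ := sol_gamma hn1 hn12 hn23 hA1 hA2 hA3 hsp hdp
    have hadm := sol_admissible hn1 hn12 hn23 hA1 hA2 hA3 hsp hdp
    have hrootp := sol_root hn1 hn12 hn23 hA1 hA2 hA3 hsp hdp
    have hrootq := sol_root hn1 hn12 hn23 hA1 hA2 hA3 hsq hdq
    rw [← hdegeq] at hrootq
    have hcp0 : p.leadingCoeff ≠ 0 := leadingCoeff_ne_zero.mpr hsp.1
    have hcq0 : q.leadingCoeff ≠ 0 := leadingCoeff_ne_zero.mpr hsq.1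
    have hα2 : A2.leadingCoeff ≠ 0 := leadingCoeff_ne_zero.mpr hA2
    have hα3 : A3.leadingCoeff ≠ 0 := leadingCoeff_ne_zero.mpr hA3
    obtain ⟨_, _, hND3⟩ := hND p.natDegree hγ hadm
    apply hND3
    have hPform : edgePoly n1 n2 n3 A1 A2 A3 p.natDegree
        = C A2.leadingCoeff * X ^ n2 + C A3.leadingCoeff * X ^ n3 := by
      rw [edgePoly, hTp]
      simp
    have hfact : ∀ x : 𝕜, x ≠ 0 → (edgePoly n1 n2 n3 A1 A2 A3 p.natDegree).IsRoot x →
        A2.leadingCoeff + A3.leadingCoeff * x ^ (n3 - n2) = 0 := by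
      intro x hx hxroot
      have h := hxroot
      rw [IsRoot, hPform] at h
      simp only [eval_add, eval_mul, eval_C, eval_pow, eval_X] at h
      have hsplit : x ^ n3 = x ^ n2 * x ^ (n3 - n2) := by
        rw [← pow_add]
        congr 1
        omega
      rw [hsplit] at h
      have h2 : x ^ n2 * (A2.leadingCoeff + A3.leadingCoeff * x ^ (n3 - n2)) = 0 := by
        linear_combination h
      exact (mul_eq_zero.mp h2).resolve_left (pow_ne_zero _ hx)
    have hfp := hfact _ (inv_ne_zero hcp0) hrootp
    have hfq := hfact _ (inv_ne_zero hcq0) hrootq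
    have hpoweq : (p.leadingCoeff⁻¹) ^ (n3 - n2) = (q.leadingCoeff⁻¹) ^ (n3 - n2) := by
      have h : A3.leadingCoeff * (p.leadingCoeff⁻¹) ^ (n3 - n2)
          = A3.leadingCoeff * (q.leadingCoeff⁻¹) ^ (n3 - n2) := by
        linear_combination hfp - hfq
      exact mul_left_cancel₀ hα3 h
    refine ⟨p.leadingCoeff⁻¹, q.leadingCoeff⁻¹, p.leadingCoeff⁻¹ * (q.leadingCoeff⁻¹)⁻¹,
      inv_ne_zero hcp0, inv_ne_zero hcq0, hrootp, hrootq, ?_, ?_, Or.inl ?_⟩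
    · intro h
      rw [inv_inv] at h
      exact hC ((inv_mul_eq_one₀ hcp0).mp h)
    · field_simp
    · rw [mul_pow, hpoweq, ← mul_pow, mul_inv_cancel₀ (inv_ne_zero hcq0), one_pow]
set_option maxHeartbeats 2000000 in
/-- Proposition 6.3. Under (ND), if at least two distinct
nonconstant rational solutions exist and `r` is the maximal realized denominator
degree, then the total number `S` of nonconstant rational solutions satisfies the
listed case-by-case bounds over `𝕜`. -/
theorem stmt18 {𝕜 : Type*} [RCLike 𝕜] (n1 n2 n3 : ℕ)
    (hn1 : 1 < n1) (hn12 : n1 < n2) (hn23 : n2 < n3)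
    (A1 A2 A3 : Polynomial 𝕜) (hA1 : A1 ≠ 0) (hA2 : A2 ≠ 0) (hA3 : A3 ≠ 0)
    (hND : ND n1 n2 n3 A1 A2 A3)
    (htwo : ∃ p1 p2 : Polynomial 𝕜,
      IsSolDen n1 n2 n3 A1 A2 A3 p1 ∧ IsSolDen n1 n2 n3 A1 A2 A3 p2 ∧
      1 ≤ p1.natDegree ∧ 1 ≤ p2.natDegree ∧ p1 ≠ p2)
    (r : ℕ)
    (hrmem : ∃ p : Polynomial 𝕜,
      IsSolDen n1 n2 n3 A1 A2 A3 p ∧ 1 ≤ p.natDegree ∧ p.natDegree = r)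
    (hrmax : ∀ p : Polynomial 𝕜,
      IsSolDen n1 n2 n3 A1 A2 A3 p → 1 ≤ p.natDegree → p.natDegree ≤ r) :
    {p : Polynomial 𝕜 | IsSolDen n1 n2 n3 A1 A2 A3 p ∧ 1 ≤ p.natDegree}.Finite ∧
    -- (a)
    (((A1.natDegree : ℤ) < ((n1 : ℤ) - 1) * r - 1 ∧
        (A2.natDegree : ℤ) = ((n2 : ℤ) - 1) * r - 1) →
      {p : Polynomial 𝕜 | IsSolDen n1 n2 n3 A1 A2 A3 p ∧ 1 ≤ p.natDegree}.ncard ≤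
        n3 - 1) ∧
    -- (b)
    (((A1.natDegree : ℤ) > ((n1 : ℤ) - 1) * r - 1 ∧
        (A2.natDegree : ℤ) = (A1.natDegree : ℤ) + ((n2 : ℤ) - n1) * r ∧
        Tie n1 n2 n3 A1.natDegree A2.natDegree A3.natDegree r =
          {AbelIdx.I2, AbelIdx.I1}) →
      {p : Polynomial 𝕜 | IsSolDen n1 n2 n3 A1 A2 A3 p ∧ 1 ≤ p.natDegree}.ncard ≤
        n3) ∧
    -- (c)
    (((A1.natDegree : ℤ) > ((n1 : ℤ) - 1) * r - 1 ∧
        (A2.natDegree : ℤ) = (A1.natDegree : ℤ) + ((n2 : ℤ) - n1) * r ∧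
        Tie n1 n2 n3 A1.natDegree A2.natDegree A3.natDegree r =
          {AbelIdx.I3, AbelIdx.I2, AbelIdx.I1}) →
      {p : Polynomial 𝕜 | IsSolDen n1 n2 n3 A1 A2 A3 p ∧ 1 ≤ p.natDegree}.ncard ≤
        n3 - n1) ∧
    -- (d)
    (((A1.natDegree : ℤ) = ((n1 : ℤ) - 1) * r - 1 ∧
        (A2.natDegree : ℤ) ≤ ((n2 : ℤ) - 1) * r - 1 ∧
        Tie n1 n2 n3 A1.natDegree A2.natDegree A3.natDegree r =
          {AbelIdx.I2, AbelIdx.I1, AbelIdx.D}) →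
      {p : Polynomial 𝕜 | IsSolDen n1 n2 n3 A1 A2 A3 p ∧ 1 ≤ p.natDegree}.ncard ≤
        (n2 - 1) + 2 * (n3 - 1)) ∧
    -- (e)
    (((A1.natDegree : ℤ) = ((n1 : ℤ) - 1) * r - 1 ∧
        (A2.natDegree : ℤ) ≤ ((n2 : ℤ) - 1) * r - 1 ∧
        Tie n1 n2 n3 A1.natDegree A2.natDegree A3.natDegree r =
          {AbelIdx.I3, AbelIdx.I1, AbelIdx.D}) →
      {p : Polynomial 𝕜 | IsSolDen n1 n2 n3 A1 A2 A3 p ∧ 1 ≤ p.natDegree}.ncard ≤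
        n3 - 1) ∧
    -- (f)
    (((A1.natDegree : ℤ) = ((n1 : ℤ) - 1) * r - 1 ∧
        (A2.natDegree : ℤ) ≤ ((n2 : ℤ) - 1) * r - 1 ∧
        Tie n1 n2 n3 A1.natDegree A2.natDegree A3.natDegree r =
          {AbelIdx.I3, AbelIdx.I2, AbelIdx.I1, AbelIdx.D}) →
      {p : Polynomial 𝕜 | IsSolDen n1 n2 n3 A1 A2 A3 p ∧ 1 ≤ p.natDegree}.ncard ≤
        n3 - 1) := by
  classical
  obtain ⟨p₀, hsol₀, hd₀, hdeg₀⟩ := hrmem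
  have hr1 : 1 ≤ r := hdeg₀ ▸ hd₀
  have hadmr : 2 ≤ (Tie n1 n2 n3 A1.natDegree A2.natDegree A3.natDegree r).card := by
    have h := sol_admissible hn1 hn12 hn23 hA1 hA2 hA3 hsol₀ hd₀
    rw [hdeg₀] at h
    exact h
  have hcard2 : ∀ p : Polynomial 𝕜, IsSolDen n1 n2 n3 A1 A2 A3 p → 1 ≤ p.natDegree →
      2 ≤ (Tie n1 n2 n3 A1.natDegree A2.natDegree A3.natDegree p.natDegree).card :=
    fun p hs hdp => sol_admissible hn1 hn12 hn23 hA1 hA2 hA3 hs hdp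
  have hle : ∀ ℓ' : AbelIdx, ℓ' ∈ Tie n1 n2 n3 A1.natDegree A2.natDegree A3.natDegree r →
      ∀ ℓ : AbelIdx, Phi n1 n2 n3 A1.natDegree A2.natDegree A3.natDegree r ℓ'
        ≤ Phi n1 n2 n3 A1.natDegree A2.natDegree A3.natDegree r ℓ := by
    intro ℓ' h ℓ
    rw [mem_tie_iff.mp h]
    exact omin_le _ _ _ _ _ _ _ _
  have hsplit : {p : Polynomial 𝕜 | IsSolDen n1 n2 n3 A1 A2 A3 p ∧ 1 ≤ p.natDegree}
      = {p : Polynomial 𝕜 | IsSolDen n1 n2 n3 A1 A2 A3 p ∧ 1 ≤ p.natDegree ∧ p.natDegree = r}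
      ∪ {p : Polynomial 𝕜 | IsSolDen n1 n2 n3 A1 A2 A3 p ∧ 1 ≤ p.natDegree
          ∧ p.natDegree < r} := by
    ext p
    simp only [Set.mem_setOf_eq, Set.mem_union]
    constructor
    · rintro ⟨hs, hdp⟩
      rcases eq_or_lt_of_le (hrmax p hs hdp) with h | h
      · exact Or.inl ⟨hs, hdp, h⟩
      · exact Or.inr ⟨hs, hdp, h⟩
    · rintro (⟨hs, hdp, _⟩ | ⟨hs, hdp, _⟩) <;> exact ⟨hs, hdp⟩
  have hfin : {p : Polynomial 𝕜 | IsSolDen n1 n2 n3 A1 A2 A3 p ∧ 1 ≤ p.natDegree}.Finite := by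
    have hsub : {p : Polynomial 𝕜 | IsSolDen n1 n2 n3 A1 A2 A3 p ∧ 1 ≤ p.natDegree}
        ⊆ ⋃ d ∈ Finset.range (r+1),
          {p : Polynomial 𝕜 | IsSolDen n1 n2 n3 A1 A2 A3 p ∧ 1 ≤ p.natDegree
            ∧ p.natDegree = d} := by
      rintro p ⟨hs, hdp⟩
      simp only [Set.mem_iUnion, Set.mem_setOf_eq, Finset.mem_coe, Finset.mem_range]
      exact ⟨p.natDegree, Nat.lt_succ_of_le (hrmax p hs hdp), hs, hdp, rfl⟩
    exact Set.Finite.subset (Set.Finite.biUnion (Finset.range (r+1)).finite_toSet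
      (fun d _ => sol_degree_finite hn1 hn12 hn23 hA1 hA2 hA3 hND d)) hsub
  have hempty : (∀ p : Polynomial 𝕜, IsSolDen n1 n2 n3 A1 A2 A3 p → 1 ≤ p.natDegree →
      p.natDegree < r →
      (AbelIdx.I1 ∉ Tie n1 n2 n3 A1.natDegree A2.natDegree A3.natDegree p.natDegree)
      ∧ (AbelIdx.I2 ∉ Tie n1 n2 n3 A1.natDegree A2.natDegree A3.natDegree p.natDegree)
      ∧ (AbelIdx.D ∉ Tie n1 n2 n3 A1.natDegree A2.natDegree A3.natDegree p.natDegree)) →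
      {p : Polynomial 𝕜 | IsSolDen n1 n2 n3 A1 A2 A3 p ∧ 1 ≤ p.natDegree
        ∧ p.natDegree < r} = ∅ := by
    intro hexc
    rw [Set.eq_empty_iff_forall_notMem]
    rintro p ⟨hs, hdp, hlt⟩
    obtain ⟨h1, h2, hD⟩ := hexc p hs hdp hlt
    have hsub : Tie n1 n2 n3 A1.natDegree A2.natDegree A3.natDegree p.natDegree
        ⊆ {AbelIdx.I3} := by
      intro ℓ hℓ
      cases ℓ
      · exact absurd hℓ h1
      · exact absurd hℓ h2
      · simp
      · exact absurd hℓ hD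
    have hc1 := Finset.card_le_card hsub
    rw [Finset.card_singleton] at hc1
    have hc2 := hcard2 p hs hdp
    omega
  have hsmallT : (∀ p : Polynomial 𝕜, IsSolDen n1 n2 n3 A1 A2 A3 p → 1 ≤ p.natDegree →
      p.natDegree < r →
      (AbelIdx.I1 ∉ Tie n1 n2 n3 A1.natDegree A2.natDegree A3.natDegree p.natDegree)
      ∧ (AbelIdx.D ∉ Tie n1 n2 n3 A1.natDegree A2.natDegree A3.natDegree p.natDegree)) →
      ∀ p : Polynomial 𝕜, IsSolDen n1 n2 n3 A1 A2 A3 p → 1 ≤ p.natDegree →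
      p.natDegree < r → Tie n1 n2 n3 A1.natDegree A2.natDegree A3.natDegree p.natDegree
        = {AbelIdx.I3, AbelIdx.I2} := by
    intro hexc p hs hdp hlt
    obtain ⟨h1, hD⟩ := hexc p hs hdp hlt
    have hsub : Tie n1 n2 n3 A1.natDegree A2.natDegree A3.natDegree p.natDegree
        ⊆ {AbelIdx.I3, AbelIdx.I2} := by
      intro ℓ hℓ
      cases ℓ
      · exact absurd hℓ h1
      · simp
      · simp
      · exact absurd hℓ hD
    refine Finset.eq_of_subset_of_card_le hsub ?_
    rw [show ({AbelIdx.I3, AbelIdx.I2} : Finset AbelIdx).card = 2 from by decide]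
    exact hcard2 p hs hdp
  have hsub1 : ∀ S : Set (Polynomial 𝕜), S.Subsingleton → S.ncard ≤ 1 := by
    intro S hS
    exact (Set.ncard_le_one hS.finite).mpr (fun a ha b hb => hS ha hb)
  refine ⟨hfin, ?_, ?_, ?_, ?_, ?_, ?_⟩
  -- case (a)
  · rintro ⟨ha1, ha2⟩
    have hφ2D : Phi n1 n2 n3 A1.natDegree A2.natDegree A3.natDegree r AbelIdx.I2 = Phi n1 n2 n3 A1.natDegree A2.natDegree A3.natDegree r AbelIdx.D := by
      simp only [Phi]; linarith
    have hφ1D : Phi n1 n2 n3 A1.natDegree A2.natDegree A3.natDegree r AbelIdx.D < Phi n1 n2 n3 A1.natDegree A2.natDegree A3.natDegree r AbelIdx.I1 := by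
      simp only [Phi]; linarith
    have h1n : AbelIdx.I1 ∉ Tie n1 n2 n3 A1.natDegree A2.natDegree A3.natDegree r := by
      intro h
      have := hle AbelIdx.I1 h AbelIdx.D
      omega
    have h2iffD : (AbelIdx.I2 ∈ Tie n1 n2 n3 A1.natDegree A2.natDegree A3.natDegree r) ↔ (AbelIdx.D ∈ Tie n1 n2 n3 A1.natDegree A2.natDegree A3.natDegree r) := by
      rw [mem_tie_iff, mem_tie_iff, hφ2D]
    have h2mem : AbelIdx.I2 ∈ Tie n1 n2 n3 A1.natDegree A2.natDegree A3.natDegree r := by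
      by_contra h2
      have hDn : AbelIdx.D ∉ Tie n1 n2 n3 A1.natDegree A2.natDegree A3.natDegree r := fun h => h2 (h2iffD.mpr h)
      have hsub : Tie n1 n2 n3 A1.natDegree A2.natDegree A3.natDegree r ⊆ {AbelIdx.I3} := by
        intro ℓ hℓ
        cases ℓ
        · exact absurd hℓ h1n
        · exact absurd hℓ h2
        · simp
        · exact absurd hℓ hDn
      have hc1 := Finset.card_le_card hsub
      rw [Finset.card_singleton] at hc1
      omega
    have hDmem : AbelIdx.D ∈ Tie n1 n2 n3 A1.natDegree A2.natDegree A3.natDegree r := h2iffD.mp h2mem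
    by_cases h3 : AbelIdx.I3 ∈ Tie n1 n2 n3 A1.natDegree A2.natDegree A3.natDegree r
    · set Q : Polynomial 𝕜 := C A2.leadingCoeff * X^(n2-1) + C A3.leadingCoeff * X^(n3-1)
        + C (r:𝕜) with hQdef
      have hα3 : A3.leadingCoeff ≠ 0 := leadingCoeff_ne_zero.mpr hA3
      have hQdeg : Q.natDegree = n3-1 := by
        rw [hQdef]
        compute_degree
        all_goals first
          | omega
          | (rw [if_neg (by omega)]; simpa using hα3)
          | (rw [if_neg (by omega), if_neg (by omega)]; simpa using hα3)
          | simp_all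
      have hQne : Q ≠ 0 := by
        intro h0
        rw [h0, natDegree_zero] at hQdeg
        omega
      have hP : edgePoly n1 n2 n3 A1 A2 A3 r = C A2.leadingCoeff * X^n2
          + C A3.leadingCoeff * X^n3 + (r : Polynomial 𝕜) * X := by
        rw [edgePoly, if_neg h1n, if_pos h2mem, if_pos h3, if_pos hDmem, zero_add]
      have hrt : ∀ x : 𝕜, x ≠ 0 → (edgePoly n1 n2 n3 A1 A2 A3 r).IsRoot x → Q.IsRoot x := by
        intro x hx hxr
        rw [IsRoot, hP] at hxr
        simp only [eval_add, eval_mul, eval_C, eval_pow, eval_X, eval_natCast] at hxr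
        have hsp2 : x^n2 = x * x^(n2-1) := by
          conv_lhs => rw [show n2 = 1 + (n2-1) by omega]
          rw [pow_add, pow_one]
        have hsp3 : x^n3 = x * x^(n3-1) := by
          conv_lhs => rw [show n3 = 1 + (n3-1) by omega]
          rw [pow_add, pow_one]
        have h2 : x * Q.eval x = 0 := by
          rw [hQdef]
          simp only [eval_add, eval_mul, eval_C, eval_pow, eval_X]
          rw [hsp2, hsp3] at hxr
          linear_combination hxr
        exact (mul_eq_zero.mp h2).resolve_left hx
      have hcR := count_degree hn1 hn12 hn23 hA1 hA2 hA3 hND r Q hQne hrt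
      have hes := hempty (fun p hs hdp hlt =>
        ⟨not_tie_small hlt (hle AbelIdx.I2 h2mem AbelIdx.I1) (by simp only [abelSlope]; omega),
         not_tie_small hlt (hle AbelIdx.I3 h3 AbelIdx.I2) (by simp only [abelSlope]; omega),
         not_tie_small hlt (hle AbelIdx.I3 h3 AbelIdx.D) (by simp only [abelSlope]; omega)⟩)
      rw [hsplit, hes, Set.union_empty]
      exact hQdeg ▸ hcR
    · set Q : Polynomial 𝕜 := C A2.leadingCoeff * X^(n2-1) + C (r:𝕜) with hQdef
      have hα2 : A2.leadingCoeff ≠ 0 := leadingCoeff_ne_zero.mpr hA2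
      have hQdeg : Q.natDegree = n2-1 := by
        rw [hQdef]
        compute_degree
        all_goals first
          | omega
          | (rw [if_neg (by omega)]; simpa using hα2)
          | (rw [if_neg (by omega), if_neg (by omega)]; simpa using hα2)
          | simp_all
      have hQne : Q ≠ 0 := by
        intro h0
        rw [h0, natDegree_zero] at hQdeg
        omega
      have hP : edgePoly n1 n2 n3 A1 A2 A3 r = C A2.leadingCoeff * X^n2
          + (r : Polynomial 𝕜) * X := by
        rw [edgePoly, if_neg h1n, if_pos h2mem, if_neg h3, if_pos hDmem, zero_add, add_zero]
      have hrt : ∀ x : 𝕜, x ≠ 0 → (edgePoly n1 n2 n3 A1 A2 A3 r).IsRoot x → Q.IsRoot x := by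
        intro x hx hxr
        rw [IsRoot, hP] at hxr
        simp only [eval_add, eval_mul, eval_C, eval_pow, eval_X, eval_natCast] at hxr
        have hsp2 : x^n2 = x * x^(n2-1) := by
          conv_lhs => rw [show n2 = 1 + (n2-1) by omega]
          rw [pow_add, pow_one]
        have h2 : x * Q.eval x = 0 := by
          rw [hQdef]
          simp only [eval_add, eval_mul, eval_C, eval_pow, eval_X]
          rw [hsp2] at hxr
          linear_combination hxr
        exact (mul_eq_zero.mp h2).resolve_left hx
      have hcR := count_degree hn1 hn12 hn23 hA1 hA2 hA3 hND r Q hQne hrt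
      have hsmallTie := hsmallT (fun p hs hdp hlt =>
        ⟨not_tie_small hlt (hle AbelIdx.I2 h2mem AbelIdx.I1) (by simp only [abelSlope]; omega),
         not_tie_small hlt (hle AbelIdx.I2 h2mem AbelIdx.D) (by simp only [abelSlope]; omega)⟩)
      rw [hsplit]
      refine le_trans (Set.ncard_union_le _ _) ?_
      have h2 := hsub1 _ (solS_subsingleton hn1 hn12 hn23 hA1 hA2 hA3 hND r hsmallTie)
      have h1 := hcR
      rw [hQdeg] at h1
      omega
  -- case (b)
  · rintro ⟨ha1, ha2, hTie⟩
    have m1 : AbelIdx.I1 ∈ Tie n1 n2 n3 A1.natDegree A2.natDegree A3.natDegree r := by rw [hTie]; decide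
    have m2 : AbelIdx.I2 ∈ Tie n1 n2 n3 A1.natDegree A2.natDegree A3.natDegree r := by rw [hTie]; decide
    have m3n : AbelIdx.I3 ∉ Tie n1 n2 n3 A1.natDegree A2.natDegree A3.natDegree r := by rw [hTie]; decide
    have mDn : AbelIdx.D ∉ Tie n1 n2 n3 A1.natDegree A2.natDegree A3.natDegree r := by rw [hTie]; decide
    have hLC : A2.leadingCoeff ≠ 0 := leadingCoeff_ne_zero.mpr hA2
    set Q : Polynomial 𝕜 := C A1.leadingCoeff + C A2.leadingCoeff * X^(n2-n1) with hQdef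
    have hQdeg : Q.natDegree = n2-n1 := by
      rw [hQdef]
      compute_degree
      all_goals first
        | omega
        | (rw [if_neg (by omega)]; simpa using hLC)
        | (rw [if_neg (by omega), if_neg (by omega)]; simpa using hLC)
        | (rw [if_neg (by omega), if_neg (by omega), if_neg (by omega)]; simpa using hLC)
    have hQne : Q ≠ 0 := by
      intro h0
      rw [h0, natDegree_zero] at hQdeg
      omega
    have hP : edgePoly n1 n2 n3 A1 A2 A3 r
        = C A1.leadingCoeff * X^n1 + C A2.leadingCoeff * X^n2 := by
      rw [edgePoly, if_pos m1, if_pos m2, if_neg m3n, if_neg mDn, add_zero, add_zero]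
    have hrt : ∀ x : 𝕜, x ≠ 0 → (edgePoly n1 n2 n3 A1 A2 A3 r).IsRoot x → Q.IsRoot x := by
      intro x hx hxr
      rw [IsRoot, hP] at hxr
      simp only [eval_add, eval_mul, eval_C, eval_pow, eval_X] at hxr
      have hsp2 : x^n2 = x^n1 * x^(n2-n1) := by
        conv_lhs => rw [show n2 = n1 + (n2-n1) by omega]
        rw [pow_add]
      have h2 : x^n1 * Q.eval x = 0 := by
        rw [hQdef]
        simp only [eval_add, eval_mul, eval_C, eval_pow, eval_X]
        rw [hsp2] at hxr
        linear_combination hxr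
      exact (mul_eq_zero.mp h2).resolve_left (pow_ne_zero _ hx)
    have hcR := count_degree hn1 hn12 hn23 hA1 hA2 hA3 hND r Q hQne hrt
    have hsmallTie := hsmallT (fun p hs hdp hlt =>
      ⟨not_tie_small hlt (hle AbelIdx.I2 m2 AbelIdx.I1) (by simp only [abelSlope]; omega),
       not_tie_small hlt (hle AbelIdx.I2 m2 AbelIdx.D) (by simp only [abelSlope]; omega)⟩)
    rw [hsplit]
    refine le_trans (Set.ncard_union_le _ _) ?_
    have h2 := hsub1 _ (solS_subsingleton hn1 hn12 hn23 hA1 hA2 hA3 hND r hsmallTie)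
    have h1 := hcR
    rw [hQdeg] at h1
    omega
  -- case (c)
  · rintro ⟨ha1, ha2, hTie⟩
    have m1 : AbelIdx.I1 ∈ Tie n1 n2 n3 A1.natDegree A2.natDegree A3.natDegree r := by rw [hTie]; decide
    have m2 : AbelIdx.I2 ∈ Tie n1 n2 n3 A1.natDegree A2.natDegree A3.natDegree r := by rw [hTie]; decide
    have m3 : AbelIdx.I3 ∈ Tie n1 n2 n3 A1.natDegree A2.natDegree A3.natDegree r := by rw [hTie]; decide
    have mDn : AbelIdx.D ∉ Tie n1 n2 n3 A1.natDegree A2.natDegree A3.natDegree r := by rw [hTie]; decide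
    have hLC : A3.leadingCoeff ≠ 0 := leadingCoeff_ne_zero.mpr hA3
    set Q : Polynomial 𝕜 := C A1.leadingCoeff + C A2.leadingCoeff * X^(n2-n1)
      + C A3.leadingCoeff * X^(n3-n1) with hQdef
    have hQdeg : Q.natDegree = n3-n1 := by
      rw [hQdef]
      compute_degree
      all_goals first
        | omega
        | (rw [if_neg (by omega)]; simpa using hLC)
        | (rw [if_neg (by omega), if_neg (by omega)]; simpa using hLC)
        | (rw [if_neg (by omega), if_neg (by omega), if_neg (by omega)]; simpa using hLC)
    have hQne : Q ≠ 0 := by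
      intro h0
      rw [h0, natDegree_zero] at hQdeg
      omega
    have hP : edgePoly n1 n2 n3 A1 A2 A3 r
        = C A1.leadingCoeff * X^n1 + C A2.leadingCoeff * X^n2
          + C A3.leadingCoeff * X^n3 := by
      rw [edgePoly, if_pos m1, if_pos m2, if_pos m3, if_neg mDn, add_zero]
    have hrt : ∀ x : 𝕜, x ≠ 0 → (edgePoly n1 n2 n3 A1 A2 A3 r).IsRoot x → Q.IsRoot x := by
      intro x hx hxr
      rw [IsRoot, hP] at hxr
      simp only [eval_add, eval_mul, eval_C, eval_pow, eval_X] at hxr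
      have hsp2 : x^n2 = x^n1 * x^(n2-n1) := by
        conv_lhs => rw [show n2 = n1 + (n2-n1) by omega]
        rw [pow_add]
      have hsp3 : x^n3 = x^n1 * x^(n3-n1) := by
        conv_lhs => rw [show n3 = n1 + (n3-n1) by omega]
        rw [pow_add]
      have h2 : x^n1 * Q.eval x = 0 := by
        rw [hQdef]
        simp only [eval_add, eval_mul, eval_C, eval_pow, eval_X]
        rw [hsp2, hsp3] at hxr
        linear_combination hxr
      exact (mul_eq_zero.mp h2).resolve_left (pow_ne_zero _ hx)
    have hcR := count_degree hn1 hn12 hn23 hA1 hA2 hA3 hND r Q hQne hrt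
    have hes := hempty (fun p hs hdp hlt =>
      ⟨not_tie_small hlt (hle AbelIdx.I3 m3 AbelIdx.I1) (by simp only [abelSlope]; omega),
       not_tie_small hlt (hle AbelIdx.I3 m3 AbelIdx.I2) (by simp only [abelSlope]; omega),
       not_tie_small hlt (hle AbelIdx.I3 m3 AbelIdx.D) (by simp only [abelSlope]; omega)⟩)
    rw [hsplit, hes, Set.union_empty]
    exact hQdeg ▸ hcR
  -- case (d)
  · rintro ⟨ha1, ha2, hTie⟩
    have m1 : AbelIdx.I1 ∈ Tie n1 n2 n3 A1.natDegree A2.natDegree A3.natDegree r := by rw [hTie]; decide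
    have m2 : AbelIdx.I2 ∈ Tie n1 n2 n3 A1.natDegree A2.natDegree A3.natDegree r := by rw [hTie]; decide
    have m3n : AbelIdx.I3 ∉ Tie n1 n2 n3 A1.natDegree A2.natDegree A3.natDegree r := by rw [hTie]; decide
    have mD : AbelIdx.D ∈ Tie n1 n2 n3 A1.natDegree A2.natDegree A3.natDegree r := by rw [hTie]; decide
    have hLC : A2.leadingCoeff ≠ 0 := leadingCoeff_ne_zero.mpr hA2
    set Q : Polynomial 𝕜 := C A1.leadingCoeff * X^(n1-1) + C A2.leadingCoeff * X^(n2-1)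
      + C (r:𝕜) with hQdef
    have hQdeg : Q.natDegree = n2-1 := by
      rw [hQdef]
      compute_degree
      all_goals first
        | omega
        | (rw [if_neg (by omega)]; simpa using hLC)
        | (rw [if_neg (by omega), if_neg (by omega)]; simpa using hLC)
        | (rw [if_neg (by omega), if_neg (by omega), if_neg (by omega)]; simpa using hLC)
    have hQne : Q ≠ 0 := by
      intro h0
      rw [h0, natDegree_zero] at hQdeg
      omega
    have hP : edgePoly n1 n2 n3 A1 A2 A3 r
        = C A1.leadingCoeff * X^n1 + C A2.leadingCoeff * X^n2
          + (r : Polynomial 𝕜) * X := by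
      rw [edgePoly, if_pos m1, if_pos m2, if_neg m3n, if_pos mD, add_zero]
    have hrt : ∀ x : 𝕜, x ≠ 0 → (edgePoly n1 n2 n3 A1 A2 A3 r).IsRoot x → Q.IsRoot x := by
      intro x hx hxr
      rw [IsRoot, hP] at hxr
      simp only [eval_add, eval_mul, eval_C, eval_pow, eval_X, eval_natCast] at hxr
      have hsp1 : x^n1 = x * x^(n1-1) := by
        conv_lhs => rw [show n1 = 1 + (n1-1) by omega]
        rw [pow_add, pow_one]
      have hsp2 : x^n2 = x * x^(n2-1) := by
        conv_lhs => rw [show n2 = 1 + (n2-1) by omega]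
        rw [pow_add, pow_one]
      have h2 : x * Q.eval x = 0 := by
        rw [hQdef]
        simp only [eval_add, eval_mul, eval_C, eval_pow, eval_X]
        rw [hsp1, hsp2] at hxr
        linear_combination hxr
      exact (mul_eq_zero.mp h2).resolve_left hx
    have hcR := count_degree hn1 hn12 hn23 hA1 hA2 hA3 hND r Q hQne hrt
    have hsmallTie := hsmallT (fun p hs hdp hlt =>
      ⟨not_tie_small hlt (hle AbelIdx.I2 m2 AbelIdx.I1) (by simp only [abelSlope]; omega),
       not_tie_small hlt (hle AbelIdx.I2 m2 AbelIdx.D) (by simp only [abelSlope]; omega)⟩)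
    rw [hsplit]
    refine le_trans (Set.ncard_union_le _ _) ?_
    have h2 := hsub1 _ (solS_subsingleton hn1 hn12 hn23 hA1 hA2 hA3 hND r hsmallTie)
    have h1 := hcR
    rw [hQdeg] at h1
    omega
  -- case (e)
  · rintro ⟨ha1, ha2, hTie⟩
    have m1 : AbelIdx.I1 ∈ Tie n1 n2 n3 A1.natDegree A2.natDegree A3.natDegree r := by rw [hTie]; decide
    have m2n : AbelIdx.I2 ∉ Tie n1 n2 n3 A1.natDegree A2.natDegree A3.natDegree r := by rw [hTie]; decide
    have m3 : AbelIdx.I3 ∈ Tie n1 n2 n3 A1.natDegree A2.natDegree A3.natDegree r := by rw [hTie]; decide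
    have mD : AbelIdx.D ∈ Tie n1 n2 n3 A1.natDegree A2.natDegree A3.natDegree r := by rw [hTie]; decide
    have hLC : A3.leadingCoeff ≠ 0 := leadingCoeff_ne_zero.mpr hA3
    set Q : Polynomial 𝕜 := C A1.leadingCoeff * X^(n1-1) + C A3.leadingCoeff * X^(n3-1)
      + C (r:𝕜) with hQdef
    have hQdeg : Q.natDegree = n3-1 := by
      rw [hQdef]
      compute_degree
      all_goals first
        | omega
        | (rw [if_neg (by omega)]; simpa using hLC)
        | (rw [if_neg (by omega), if_neg (by omega)]; simpa using hLC)
        | (rw [if_neg (by omega), if_neg (by omega), if_neg (by omega)]; simpa using hLC)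
    have hQne : Q ≠ 0 := by
      intro h0
      rw [h0, natDegree_zero] at hQdeg
      omega
    have hP : edgePoly n1 n2 n3 A1 A2 A3 r
        = C A1.leadingCoeff * X^n1 + C A3.leadingCoeff * X^n3
          + (r : Polynomial 𝕜) * X := by
      rw [edgePoly, if_pos m1, if_neg m2n, if_pos m3, if_pos mD, add_zero]
    have hrt : ∀ x : 𝕜, x ≠ 0 → (edgePoly n1 n2 n3 A1 A2 A3 r).IsRoot x → Q.IsRoot x := by
      intro x hx hxr
      rw [IsRoot, hP] at hxr
      simp only [eval_add, eval_mul, eval_C, eval_pow, eval_X, eval_natCast] at hxr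
      have hsp1 : x^n1 = x * x^(n1-1) := by
        conv_lhs => rw [show n1 = 1 + (n1-1) by omega]
        rw [pow_add, pow_one]
      have hsp3 : x^n3 = x * x^(n3-1) := by
        conv_lhs => rw [show n3 = 1 + (n3-1) by omega]
        rw [pow_add, pow_one]
      have h2 : x * Q.eval x = 0 := by
        rw [hQdef]
        simp only [eval_add, eval_mul, eval_C, eval_pow, eval_X]
        rw [hsp1, hsp3] at hxr
        linear_combination hxr
      exact (mul_eq_zero.mp h2).resolve_left hx
    have hcR := count_degree hn1 hn12 hn23 hA1 hA2 hA3 hND r Q hQne hrt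
    have hes := hempty (fun p hs hdp hlt =>
      ⟨not_tie_small hlt (hle AbelIdx.I3 m3 AbelIdx.I1) (by simp only [abelSlope]; omega),
       not_tie_small hlt (hle AbelIdx.I3 m3 AbelIdx.I2) (by simp only [abelSlope]; omega),
       not_tie_small hlt (hle AbelIdx.I3 m3 AbelIdx.D) (by simp only [abelSlope]; omega)⟩)
    rw [hsplit, hes, Set.union_empty]
    exact hQdeg ▸ hcR
  -- case (f)
  · rintro ⟨ha1, ha2, hTie⟩
    have m1 : AbelIdx.I1 ∈ Tie n1 n2 n3 A1.natDegree A2.natDegree A3.natDegree r := by rw [hTie]; decide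
    have m2 : AbelIdx.I2 ∈ Tie n1 n2 n3 A1.natDegree A2.natDegree A3.natDegree r := by rw [hTie]; decide
    have m3 : AbelIdx.I3 ∈ Tie n1 n2 n3 A1.natDegree A2.natDegree A3.natDegree r := by rw [hTie]; decide
    have mD : AbelIdx.D ∈ Tie n1 n2 n3 A1.natDegree A2.natDegree A3.natDegree r := by rw [hTie]; decide
    have hLC : A3.leadingCoeff ≠ 0 := leadingCoeff_ne_zero.mpr hA3
    set Q : Polynomial 𝕜 := C A1.leadingCoeff * X^(n1-1) + C A2.leadingCoeff * X^(n2-1)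
      + C A3.leadingCoeff * X^(n3-1) + C (r:𝕜) with hQdef
    have hQdeg : Q.natDegree = n3-1 := by
      rw [hQdef]
      compute_degree
      all_goals first
        | omega
        | (rw [if_neg (by omega)]; simpa using hLC)
        | (rw [if_neg (by omega), if_neg (by omega)]; simpa using hLC)
        | (rw [if_neg (by omega), if_neg (by omega), if_neg (by omega)]; simpa using hLC)
    have hQne : Q ≠ 0 := by
      intro h0
      rw [h0, natDegree_zero] at hQdeg
      omega
    have hP : edgePoly n1 n2 n3 A1 A2 A3 r
        = C A1.leadingCoeff * X^n1 + C A2.leadingCoeff * X^n2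
          + C A3.leadingCoeff * X^n3 + (r : Polynomial 𝕜) * X := by
      rw [edgePoly, if_pos m1, if_pos m2, if_pos m3, if_pos mD]
    have hrt : ∀ x : 𝕜, x ≠ 0 → (edgePoly n1 n2 n3 A1 A2 A3 r).IsRoot x → Q.IsRoot x := by
      intro x hx hxr
      rw [IsRoot, hP] at hxr
      simp only [eval_add, eval_mul, eval_C, eval_pow, eval_X, eval_natCast] at hxr
      have hsp1 : x^n1 = x * x^(n1-1) := by
        conv_lhs => rw [show n1 = 1 + (n1-1) by omega]
        rw [pow_add, pow_one]
      have hsp2 : x^n2 = x * x^(n2-1) := by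
        conv_lhs => rw [show n2 = 1 + (n2-1) by omega]
        rw [pow_add, pow_one]
      have hsp3 : x^n3 = x * x^(n3-1) := by
        conv_lhs => rw [show n3 = 1 + (n3-1) by omega]
        rw [pow_add, pow_one]
      have h2 : x * Q.eval x = 0 := by
        rw [hQdef]
        simp only [eval_add, eval_mul, eval_C, eval_pow, eval_X]
        rw [hsp1, hsp2, hsp3] at hxr
        linear_combination hxr
      exact (mul_eq_zero.mp h2).resolve_left hx
    have hcR := count_degree hn1 hn12 hn23 hA1 hA2 hA3 hND r Q hQne hrt
    have hes := hempty (fun p hs hdp hlt =>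
      ⟨not_tie_small hlt (hle AbelIdx.I3 m3 AbelIdx.I1) (by simp only [abelSlope]; omega),
       not_tie_small hlt (hle AbelIdx.I3 m3 AbelIdx.I2) (by simp only [abelSlope]; omega),
       not_tie_small hlt (hle AbelIdx.I3 m3 AbelIdx.D) (by simp only [abelSlope]; omega)⟩)
    rw [hsplit, hes, Set.union_empty]
    exact hQdeg ▸ hcR
end
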